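/- arXiv:2512.05426 — 11 statements merged into one kernel-verified Lean document; each statement's English description precedes it below -/
import Mathlib

section
/- Assume (h1): L(K) ⊆ K and L has an eigenvalue λ₁ > 0 with eigenvector φ₁ ∈ K \ {0}; (h2): F is increasing on K (0 ≤ u ≤ v implies F(u) ≤ F(v)); (h3): there exists r > 0 such that F(λ₁u) ≥ u for all u ∈ K with Φ(u) = r; (h4): there exist α > 0 and μ ∈ K \ {0} such that Lμ ≤ αμ and F(αμ) ≤ μ. Then u̲ = (r/Φ(φ₁))·L(φ₁) is a lower solution and ū = Lμ is an upper solution of the equation u = LF(u), i.e., u̲ ≤ LF(u̲) and ū ≥ LF(ū). -/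
/-- Abstract Hammerstein equation `u = L F u` in an ordered Banach
space: under (h1)–(h4), `u̲ = (r/Φ(φ₁)) • L φ₁` is a lower solution and `ū = L μ`
is an upper solution. The order is `u ≤ v ↔ v - u ∈ K`. -/
theorem lower_upper_solutions_hammerstein
    {X : Type*} [NormedAddCommGroup X] [NormedSpace ℝ X] [CompleteSpace X]
    (K : Set X) (hKclosed : IsClosed K) (hKconv : Convex ℝ K)
    (hKcone : ∀ (a : ℝ), 0 ≤ a → ∀ u ∈ K, a • u ∈ K)
    (hKsalient : ∀ u ∈ K, -u ∈ K → u = 0)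
    -- semi-monotone norm
    (γ : ℝ) (hγ : 0 < γ)
    (hsemi : ∀ u v : X, u ∈ K → v - u ∈ K → ‖u‖ ≤ γ * ‖v‖)
    -- the operators
    (L : X →ₗ[ℝ] X) (F : X → X) (hFK : ∀ u ∈ K, F u ∈ K)
    (hFcont : ContinuousOn F K)
    -- the positively homogeneous functional Φ
    (Φ : X → ℝ) (hΦnonneg : ∀ u ∈ K, 0 ≤ Φ u)
    (hΦhom : ∀ (a : ℝ), 0 < a → ∀ u ∈ K, Φ (a • u) = a * Φ u)
    (hΦzero : ∀ u ∈ K, (Φ u = 0 ↔ u = 0))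
    -- (h1)
    (hLK : ∀ u ∈ K, L u ∈ K)
    (lam₁ : ℝ) (hlam : 0 < lam₁) (φ₁ : X) (hφ₁K : φ₁ ∈ K) (hφ₁ne : φ₁ ≠ 0)
    (heig : L φ₁ = lam₁ • φ₁)
    -- (h2)
    (hFmono : ∀ u v : X, u ∈ K → v - u ∈ K → F v - F u ∈ K)
    -- (h3)
    (r : ℝ) (hr : 0 < r)
    (h3 : ∀ u ∈ K, Φ u = r → F (lam₁ • u) - u ∈ K)
    -- (h4)
    (α : ℝ) (hα : 0 < α) (μ : X) (hμK : μ ∈ K) (hμne : μ ≠ 0)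
    (h4a : α • μ - L μ ∈ K) (h4b : μ - F (α • μ) ∈ K) :
    L (F ((r / Φ φ₁) • L φ₁)) - (r / Φ φ₁) • L φ₁ ∈ K ∧
    L μ - L (F (L μ)) ∈ K := by
  have hadd : ∀ a ∈ K, ∀ b ∈ K, a + b ∈ K := by
    intro a ha b hb
    have h := hKconv ha hb (by norm_num : (0:ℝ) ≤ 1/2) (by norm_num : (0:ℝ) ≤ 1/2) (by norm_num)
    have h2 := hKcone 2 (by norm_num) _ h
    have : (2:ℝ) • ((1/2 : ℝ) • a + (1/2 : ℝ) • b) = a + b := by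
      rw [smul_add, smul_smul, smul_smul]; norm_num
    rwa [this] at h2
  have hΦpos : 0 < Φ φ₁ := by
    rcases lt_or_eq_of_le (hΦnonneg φ₁ hφ₁K) with h | h
    · exact h
    · exact absurd ((hΦzero φ₁ hφ₁K).mp h.symm) hφ₁ne
  set c := r / Φ φ₁ with hc
  have hcpos : 0 < c := div_pos hr hΦpos
  set w := c • φ₁ with hw
  have hwK : w ∈ K := hKcone c hcpos.le φ₁ hφ₁K
  have hΦw : Φ w = r := by
    rw [hw, hΦhom c hcpos φ₁ hφ₁K, hc, div_mul_cancel₀ _ hΦpos.ne']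
  have hLw : L w = c • L φ₁ := by rw [hw, map_smul]
  have hlamw : lam₁ • w = c • L φ₁ := by
    rw [heig, hw, smul_smul, smul_smul, mul_comm]
  constructor
  · have h3' := h3 w hwK hΦw
    have := hLK _ h3'
    rw [map_sub, hlamw, hLw] at this
    exact this
  · have hLμK : L μ ∈ K := hLK μ hμK
    have hmono := hFmono (L μ) (α • μ) hLμK h4a
    have h1 : L (F (α • μ)) - L (F (L μ)) ∈ K := by
      have := hLK _ hmono; rwa [map_sub] at this
    have h2 : L μ - L (F (α • μ)) ∈ K := by
      have := hLK _ h4b; rwa [map_sub] at this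
    have := hadd _ h2 _ h1
    have e : L μ - L (F (α • μ)) + (L (F (α • μ)) - L (F (L μ))) = L μ - L (F (L μ)) := by abel
    rwa [e] at this
end

section
/- Assume (h1): L(K) ⊆ K and L has an eigenvalue λ₁ > 0 with eigenvector φ₁ ∈ K \ {0}; (h2): F is increasing on K; (h3): there exists r > 0 such that F(λ₁u) ≥ u for all u ∈ K with Φ(u) = r; (h4): there exist α > 0 and μ ∈ K \ {0} such that Lμ ≤ αμ and F(αμ) ≤ μ; and (h5): u̲ ≤ ū, where u̲ = (r/Φ(φ₁))·L(φ₁) and ū = Lμ. Then the order interval [u̲, ū] = {u : u̲ ≤ u ≤ ū} is invariant under the operator N = L∘F, i.e., N([u̲, ū]) ⊆ [u̲, ū]. -/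
/-- Under (h1)–(h5), the order interval `[u̲, ū]` with
`u̲ = (r/Φ(φ₁)) • L φ₁` and `ū = L μ` is invariant under `N = L ∘ F`.
The order is `u ≤ v ↔ v - u ∈ K`. -/
theorem interval_invariance_hammerstein
    {X : Type*} [NormedAddCommGroup X] [NormedSpace ℝ X] [CompleteSpace X]
    (K : Set X) (hKclosed : IsClosed K) (hKconv : Convex ℝ K)
    (hKcone : ∀ (a : ℝ), 0 ≤ a → ∀ u ∈ K, a • u ∈ K)
    (hKsalient : ∀ u ∈ K, -u ∈ K → u = 0)
    -- semi-monotone norm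
    (γ : ℝ) (hγ : 0 < γ)
    (hsemi : ∀ u v : X, u ∈ K → v - u ∈ K → ‖u‖ ≤ γ * ‖v‖)
    -- the operators
    (L : X →ₗ[ℝ] X) (F : X → X) (hFK : ∀ u ∈ K, F u ∈ K)
    (hFcont : ContinuousOn F K)
    -- the positively homogeneous functional Φ
    (Φ : X → ℝ) (hΦnonneg : ∀ u ∈ K, 0 ≤ Φ u)
    (hΦhom : ∀ (a : ℝ), 0 < a → ∀ u ∈ K, Φ (a • u) = a * Φ u)
    (hΦzero : ∀ u ∈ K, (Φ u = 0 ↔ u = 0))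
    -- (h1)
    (hLK : ∀ u ∈ K, L u ∈ K)
    (lam₁ : ℝ) (hlam : 0 < lam₁) (φ₁ : X) (hφ₁K : φ₁ ∈ K) (hφ₁ne : φ₁ ≠ 0)
    (heig : L φ₁ = lam₁ • φ₁)
    -- (h2)
    (hFmono : ∀ u v : X, u ∈ K → v - u ∈ K → F v - F u ∈ K)
    -- (h3)
    (r : ℝ) (hr : 0 < r)
    (h3 : ∀ u ∈ K, Φ u = r → F (lam₁ • u) - u ∈ K)
    -- (h4)
    (α : ℝ) (hα : 0 < α) (μ : X) (hμK : μ ∈ K) (hμne : μ ≠ 0)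
    (h4a : α • μ - L μ ∈ K) (h4b : μ - F (α • μ) ∈ K)
    -- (h5): u̲ ≤ ū
    (h5 : L μ - (r / Φ φ₁) • L φ₁ ∈ K) :
    ∀ u : X, u - (r / Φ φ₁) • L φ₁ ∈ K → L μ - u ∈ K →
      (L (F u) - (r / Φ φ₁) • L φ₁ ∈ K ∧ L μ - L (F u) ∈ K) := by
  intro u hlo hhi
  have hKadd : ∀ a ∈ K, ∀ b ∈ K, a + b ∈ K := by
    intro a ha b hb
    have h := hKconv ha hb (by norm_num : (0:ℝ) ≤ 1/2) (by norm_num : (0:ℝ) ≤ 1/2)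
      (by norm_num)
    have := hKcone 2 (by norm_num) _ h
    simpa [smul_smul, smul_add] using this
  have hΦpos : 0 < Φ φ₁ :=
    lt_of_le_of_ne (hΦnonneg _ hφ₁K) (fun h => hφ₁ne ((hΦzero _ hφ₁K).1 h.symm))
  set c : ℝ := r / Φ φ₁ with hc
  have hcpos : 0 < c := div_pos hr hΦpos
  have hwK : c • φ₁ ∈ K := hKcone c hcpos.le _ hφ₁K
  have hΦw : Φ (c • φ₁) = r := by
    rw [hΦhom c hcpos φ₁ hφ₁K, hc, div_mul_cancel₀ _ hΦpos.ne']
  have h3' := h3 _ hwK hΦw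
  have hkey : lam₁ • (c • φ₁) = c • L φ₁ := by
    rw [heig, smul_comm]
  rw [hkey] at h3'
  -- u ∈ K
  have huloK : c • L φ₁ ∈ K := hKcone c hcpos.le _ (hLK _ hφ₁K)
  have huK : u ∈ K := by
    have := hKadd _ hlo _ huloK
    simpa using this
  -- lower bound
  have hFu_ge : F u - c • φ₁ ∈ K := by
    have h1 := hFmono _ _ huloK hlo
    have := hKadd _ h1 _ h3'
    simpa using this
  have hL1 : L (F u - c • φ₁) ∈ K := hLK _ hFu_ge
  have hlow : L (F u) - c • L φ₁ ∈ K := by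
    have : L (F u - c • φ₁) = L (F u) - c • L φ₁ := by
      simp [map_sub, map_smul]
    rwa [this] at hL1
  -- upper bound
  have hu_le_αμ : α • μ - u ∈ K := by
    have := hKadd _ hhi _ h4a
    simpa [add_comm, add_sub, sub_add_eq_sub_sub] using this
  have hFmono' := hFmono _ _ huK hu_le_αμ
  have hFu_le : μ - F u ∈ K := by
    have := hKadd _ hFmono' _ h4b
    have h' : F (α • μ) - F u + (μ - F (α • μ)) = μ - F u := by abel
    rwa [h'] at this
  have hL2 : L (μ - F u) ∈ K := hLK _ hFu_le
  have hhigh : L μ - L (F u) ∈ K := by rwa [map_sub] at hL2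
  exact ⟨hlow, hhigh⟩
end

section
/- Assume (h1): L(K) ⊆ K and L has an eigenvalue λ₁ > 0 with eigenvector φ₁ ∈ K \ {0}; (h2): F is increasing on K; (h3): there exists r > 0 such that F(λ₁u) ≥ u for all u ∈ K with Φ(u) = r; (h4): there exist α > 0 and μ ∈ K \ {0} such that Lμ ≤ αμ and F(αμ) ≤ μ; and (h5): u̲ ≤ ū, where u̲ = (r/Φ(φ₁))·L(φ₁) and ū = Lμ. If moreover L is completely continuous (continuous and mapping bounded sets to relatively compact sets), then there exists u* ∈ [u̲, ū] such that u* = LF(u*). -/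
/-- Under (h1)–(h5), if moreover `L` is completely continuous
(continuous and mapping bounded sets into relatively compact sets), then the
equation `u = L F u` has a fixed point `u*` in the interval `[u̲, ū]`, where
`u̲ = (r/Φ(φ₁)) • L φ₁` and `ū = L μ`. The order is `u ≤ v ↔ v - u ∈ K`. -/
theorem fixed_point_hammerstein
    {X : Type*} [NormedAddCommGroup X] [NormedSpace ℝ X] [CompleteSpace X]
    (K : Set X) (hKclosed : IsClosed K) (hKconv : Convex ℝ K)
    (hKcone : ∀ (a : ℝ), 0 ≤ a → ∀ u ∈ K, a • u ∈ K)
    (hKsalient : ∀ u ∈ K, -u ∈ K → u = 0)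
    -- semi-monotone norm
    (γ : ℝ) (hγ : 0 < γ)
    (hsemi : ∀ u v : X, u ∈ K → v - u ∈ K → ‖u‖ ≤ γ * ‖v‖)
    -- the operators
    (L : X →ₗ[ℝ] X) (F : X → X) (hFK : ∀ u ∈ K, F u ∈ K)
    (hFcont : ContinuousOn F K)
    -- the positively homogeneous functional Φ
    (Φ : X → ℝ) (hΦnonneg : ∀ u ∈ K, 0 ≤ Φ u)
    (hΦhom : ∀ (a : ℝ), 0 < a → ∀ u ∈ K, Φ (a • u) = a * Φ u)
    (hΦzero : ∀ u ∈ K, (Φ u = 0 ↔ u = 0))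
    -- (h1)
    (hLK : ∀ u ∈ K, L u ∈ K)
    (lam₁ : ℝ) (hlam : 0 < lam₁) (φ₁ : X) (hφ₁K : φ₁ ∈ K) (hφ₁ne : φ₁ ≠ 0)
    (heig : L φ₁ = lam₁ • φ₁)
    -- (h2)
    (hFmono : ∀ u v : X, u ∈ K → v - u ∈ K → F v - F u ∈ K)
    -- (h3)
    (r : ℝ) (hr : 0 < r)
    (h3 : ∀ u ∈ K, Φ u = r → F (lam₁ • u) - u ∈ K)
    -- (h4)
    (α : ℝ) (hα : 0 < α) (μ : X) (hμK : μ ∈ K) (hμne : μ ≠ 0)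
    (h4a : α • μ - L μ ∈ K) (h4b : μ - F (α • μ) ∈ K)
    -- (h5): u̲ ≤ ū
    (h5 : L μ - (r / Φ φ₁) • L φ₁ ∈ K)
    -- L is completely continuous
    (hLcont : Continuous L)
    (hLcompact : ∀ s : Set X, Bornology.IsBounded s → IsCompact (closure (L '' s))) :
    ∃ u : X, u - (r / Φ φ₁) • L φ₁ ∈ K ∧ L μ - u ∈ K ∧ u = L (F u) := by

  -- Basic cone facts
  have hK0 : (0 : X) ∈ K := by simpa using hKcone 0 le_rfl φ₁ hφ₁K
  have hKadd : ∀ u ∈ K, ∀ v ∈ K, u + v ∈ K := by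
    intro u hu v hv
    have hmid : (1/2 : ℝ) • u + (1/2 : ℝ) • v ∈ K :=
      hKconv hu hv (by norm_num) (by norm_num) (by norm_num)
    have h2 := hKcone 2 (by norm_num) _ hmid
    have : (2 : ℝ) • ((1/2 : ℝ) • u + (1/2 : ℝ) • v) = u + v := by
      rw [smul_add, smul_smul, smul_smul]; norm_num
    rwa [this] at h2
  -- Φ φ₁ > 0
  have hΦφ : 0 < Φ φ₁ := by
    rcases lt_or_eq_of_le (hΦnonneg φ₁ hφ₁K) with h | h
    · exact h
    · exact absurd ((hΦzero φ₁ hφ₁K).1 h.symm) hφ₁ne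
  set c : ℝ := r / Φ φ₁ with hc_def
  have hc : 0 < c := div_pos hr hΦφ
  set u₀ : X := c • φ₁ with hu₀_def
  have hu₀K : u₀ ∈ K := hKcone c hc.le φ₁ hφ₁K
  set lo : X := c • L φ₁ with hlo_def
  set hi : X := L μ with hhi_def
  have hlo_eq : lo = L u₀ := by rw [hu₀_def, map_smul]
  have hlo_eq2 : lo = lam₁ • u₀ := by
    rw [hlo_def, heig, hu₀_def, smul_comm]
  have hloK : lo ∈ K := hlo_eq ▸ hLK u₀ hu₀K
  have hhiK : hi ∈ K := hLK μ hμK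
  have hΦu₀ : Φ u₀ = r := by
    rw [hu₀_def, hΦhom c hc φ₁ hφ₁K, hc_def, div_mul_cancel₀]
    exact hΦφ.ne'
  -- the operator T = L ∘ F
  set T : X → X := fun u => L (F u) with hT_def
  have hTK : ∀ u ∈ K, T u ∈ K := fun u hu => hLK _ (hFK u hu)
  have hTmono : ∀ u ∈ K, ∀ v, v - u ∈ K → T v - T u ∈ K := by
    intro u hu v hvu
    have := hLK _ (hFmono u v hu hvu)
    simpa [hT_def, map_sub] using this
  -- T lo ≥ lo
  have hTlo : T lo - lo ∈ K := by
    have h := h3 u₀ hu₀K hΦu₀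
    rw [← hlo_eq2] at h
    have := hLK _ h
    rw [map_sub, ← hlo_eq] at this
    exact this
  -- T hi ≤ hi
  have hThi : hi - T hi ∈ K := by
    have h1 : F (α • μ) - F hi ∈ K := hFmono hi (α • μ) hhiK h4a
    have h2 : μ - F hi ∈ K := by
      have := hKadd _ h4b _ h1
      have heq : (μ - F (α • μ)) + (F (α • μ) - F hi) = μ - F hi := by abel
      rwa [heq] at this
    have := hLK _ h2
    rw [map_sub] at this
    exact this
  -- the iteration sequence
  set seq : ℕ → X := fun n => T^[n] lo with hseq_def
  have hseq0 : seq 0 = lo := rfl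
  have hseqS : ∀ n, seq (n + 1) = T (seq n) := by
    intro n; simp [hseq_def, Function.iterate_succ_apply']
  -- seq n stays in the order interval [lo, hi] ∩ K
  have key : ∀ n, seq n ∈ K ∧ seq n - lo ∈ K ∧ hi - seq n ∈ K := by
    intro n
    induction n with
    | zero => exact ⟨hloK, by simpa [hseq0] using hK0, by simpa [hseq0, hlo_def] using h5⟩
    | succ n ih =>
      obtain ⟨hK, hlo', hhi'⟩ := ih
      refine ⟨by rw [hseqS]; exact hTK _ hK, ?_, ?_⟩
      · have h1 : T (seq n) - T lo ∈ K := hTmono lo hloK (seq n) hlo'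
        have := hKadd _ h1 _ hTlo
        have heq : (T (seq n) - T lo) + (T lo - lo) = T (seq n) - lo := by abel
        rw [heq] at this
        rwa [hseqS]
      · have h1 : T hi - T (seq n) ∈ K := hTmono (seq n) hK hi hhi'
        have := hKadd _ hThi _ h1
        have heq : (hi - T hi) + (T hi - T (seq n)) = hi - T (seq n) := by abel
        rw [heq] at this
        rwa [hseqS]
  -- monotonicity of the sequence
  have mono1 : ∀ n, seq (n + 1) - seq n ∈ K := by
    intro n
    induction n with
    | zero => rw [hseqS, hseq0]; exact hTlo
    | succ n ih =>
      have := hTmono (seq n) (key n).1 (seq (n + 1)) ih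
      rw [hseqS (n+1), hseqS n] at *
      exact this
  have mono : ∀ m n, m ≤ n → seq n - seq m ∈ K := by
    intro m n hmn
    induction n with
    | zero =>
      have : m = 0 := Nat.le_zero.mp hmn
      subst this; simpa using hK0
    | succ n ih =>
      rcases Nat.lt_or_ge m (n + 1) with h | h
      · have h1 := ih (Nat.lt_succ_iff.mp h)
        have := hKadd _ (mono1 n) _ h1
        have heq : (seq (n+1) - seq n) + (seq n - seq m) = seq (n+1) - seq m := by abel
        rwa [heq] at this
      · have : m = n + 1 := le_antisymm hmn h
        subst this; simpa using hK0
  -- the image of the order interval under F is bounded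
  set I : Set X := {x | x ∈ K ∧ x - lo ∈ K ∧ hi - x ∈ K} with hI_def
  have hFbd : Bornology.IsBounded (F '' I) := by
    rw [isBounded_iff_forall_norm_le]
    refine ⟨‖F lo‖ + γ * ‖F hi - F lo‖, ?_⟩
    rintro y ⟨x, ⟨hxK, hxlo, hxhi⟩, rfl⟩
    have h1 : F x - F lo ∈ K := hFmono lo x hloK hxlo
    have h2 : F hi - F x ∈ K := hFmono x hi hxK hxhi
    have h3' : (F hi - F lo) - (F x - F lo) ∈ K := by
      have heq : (F hi - F lo) - (F x - F lo) = F hi - F x := by abel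
      rw [heq]; exact h2
    have := hsemi (F x - F lo) (F hi - F lo) h1 h3'
    calc ‖F x‖ = ‖F lo + (F x - F lo)‖ := congrArg norm (by abel)
      _ ≤ ‖F lo‖ + ‖F x - F lo‖ := norm_add_le _ _
      _ ≤ ‖F lo‖ + γ * ‖F hi - F lo‖ := by linarith
  -- the compact set containing the tail of the sequence
  set C : Set X := closure (L '' (F '' I)) with hC_def
  have hCcomp : IsCompact C := hLcompact _ hFbd
  have hseqC : ∀ n, seq (n + 1) ∈ C := by
    intro n
    apply subset_closure
    exact ⟨F (seq n), ⟨seq n, ⟨(key n).1, (key n).2.1, (key n).2.2⟩, rfl⟩, (hseqS n).symm⟩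
  -- extract a convergent subsequence
  obtain ⟨x, hxC, ψ, hψ, hψtend⟩ := hCcomp.tendsto_subseq hseqC
  -- x dominates every seq n
  have hxup : ∀ n, x - seq n ∈ K := by
    intro n
    apply hKclosed.mem_of_tendsto (hψtend.sub_const (seq n))
    filter_upwards [Filter.eventually_ge_atTop n] with k hk
    exact mono n (ψ k + 1) (le_trans hk (Nat.le_succ_of_le (hψ.id_le k)))
  -- the whole sequence converges to x
  have htend : Filter.Tendsto seq Filter.atTop (nhds x) := by
    rw [Metric.tendsto_atTop]
    intro ε hε
    have hγ1 : 0 < γ + 1 := by linarith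
    obtain ⟨k, hk⟩ := (Metric.tendsto_atTop.mp hψtend) (ε / (γ + 1))
      (div_pos hε hγ1) |>.imp (fun k h => h k le_rfl) |> fun h => h
    refine ⟨ψ k + 1, fun n hn => ?_⟩
    have hNx : ‖x - seq (ψ k + 1)‖ < ε / (γ + 1) := by
      have := hk
      rw [Function.comp_apply, dist_eq_norm] at this
      rw [norm_sub_rev]; exact this
    have h1 : seq n - seq (ψ k + 1) ∈ K := mono _ _ hn
    have h2 : (x - seq (ψ k + 1)) - (seq n - seq (ψ k + 1)) ∈ K := by
      have heq : (x - seq (ψ k + 1)) - (seq n - seq (ψ k + 1)) = x - seq n := by abel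
      rw [heq]; exact hxup n
    have h3' := hsemi _ _ h1 h2
    rw [dist_eq_norm]
    calc ‖seq n - x‖ = ‖(seq n - seq (ψ k + 1)) - (x - seq (ψ k + 1))‖ := congrArg norm (by abel)
      _ ≤ ‖seq n - seq (ψ k + 1)‖ + ‖x - seq (ψ k + 1)‖ := norm_sub_le _ _
      _ ≤ γ * ‖x - seq (ψ k + 1)‖ + ‖x - seq (ψ k + 1)‖ := by linarith
      _ = (γ + 1) * ‖x - seq (ψ k + 1)‖ := by ring
      _ < (γ + 1) * (ε / (γ + 1)) := by
          apply mul_lt_mul_of_pos_left hNx hγ1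
      _ = ε := by field_simp
  -- limit properties
  have hxK : x ∈ K := hKclosed.mem_of_tendsto htend
    (Filter.Eventually.of_forall fun n => (key n).1)
  have hxlo : x - lo ∈ K := hKclosed.mem_of_tendsto (htend.sub_const lo)
    (Filter.Eventually.of_forall fun n => (key n).2.1)
  have hxhi : hi - x ∈ K := hKclosed.mem_of_tendsto (tendsto_const_nhds.sub htend)
    (Filter.Eventually.of_forall fun n => (key n).2.2)
  -- fixed point property
  have htendK : Filter.Tendsto seq Filter.atTop (nhdsWithin x K) := by
    rw [tendsto_nhdsWithin_iff]
    exact ⟨htend, Filter.Eventually.of_forall fun n => (key n).1⟩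
  have hFtend : Filter.Tendsto (fun n => F (seq n)) Filter.atTop (nhds (F x)) :=
    (hFcont x hxK).tendsto.comp htendK
  have hTtend : Filter.Tendsto (fun n => T (seq n)) Filter.atTop (nhds (L (F x))) :=
    (hLcont.tendsto (F x)).comp hFtend
  have htend' : Filter.Tendsto (fun n => seq (n + 1)) Filter.atTop (nhds x) :=
    htend.comp (Filter.tendsto_add_atTop_nat 1)
  have hfix : x = L (F x) := by
    apply tendsto_nhds_unique htend' ?_
    simpa only [hseqS] using hTtend
  exact ⟨x, hxlo, hxhi, hfix⟩
end

section
/- Assume L(K) ⊆ K, and let φ ∈ K \ {0} and λ > 0 be such that L(φ) ≥ λφ. If there exists r > 0 such that F(λu) ≥ u for all u ∈ K with Φ(u) = r, and F is increasing on K, then u̲ = (r/Φ(φ))·L(φ) is a lower solution of the equation u = LF(u), i.e., u̲ ≤ LF(u̲). -/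
/-- If `L(K) ⊆ K`, `φ ∈ K \ {0}`, `λ > 0` with `L φ ≥ λ • φ`,
`F` is increasing on `K`, and `F (λ • u) ≥ u` for all `u ∈ K` with `Φ u = r`,
then `u̲ = (r/Φ(φ)) • L φ` is a lower solution of `u = L F u`, i.e. `u̲ ≤ L F u̲`.
The order is `u ≤ v ↔ v - u ∈ K`. -/
theorem lower_solution_general_eigenvector
    {X : Type*} [NormedAddCommGroup X] [NormedSpace ℝ X] [CompleteSpace X]
    (K : Set X) (hKclosed : IsClosed K) (hKconv : Convex ℝ K)
    (hKcone : ∀ (a : ℝ), 0 ≤ a → ∀ u ∈ K, a • u ∈ K)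
    (hKsalient : ∀ u ∈ K, -u ∈ K → u = 0)
    -- semi-monotone norm
    (γ : ℝ) (hγ : 0 < γ)
    (hsemi : ∀ u v : X, u ∈ K → v - u ∈ K → ‖u‖ ≤ γ * ‖v‖)
    -- the operators
    (L : X →ₗ[ℝ] X) (F : X → X) (hFK : ∀ u ∈ K, F u ∈ K)
    (hFcont : ContinuousOn F K)
    -- the positively homogeneous functional Φ
    (Φ : X → ℝ) (hΦnonneg : ∀ u ∈ K, 0 ≤ Φ u)
    (hΦhom : ∀ (a : ℝ), 0 < a → ∀ u ∈ K, Φ (a • u) = a * Φ u)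
    (hΦzero : ∀ u ∈ K, (Φ u = 0 ↔ u = 0))
    -- L(K) ⊆ K
    (hLK : ∀ u ∈ K, L u ∈ K)
    -- φ ∈ K \ {0}, λ > 0, L φ ≥ λ • φ
    (lam : ℝ) (hlam : 0 < lam) (φ : X) (hφK : φ ∈ K) (hφne : φ ≠ 0)
    (hLφ : L φ - lam • φ ∈ K)
    -- F increasing on K
    (hFmono : ∀ u v : X, u ∈ K → v - u ∈ K → F v - F u ∈ K)
    -- F(λ u) ≥ u whenever Φ u = r
    (r : ℝ) (hr : 0 < r)
    (h3 : ∀ u ∈ K, Φ u = r → F (lam • u) - u ∈ K) :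
    L (F ((r / Φ φ) • L φ)) - (r / Φ φ) • L φ ∈ K := by
  have hKadd : ∀ a b : X, a ∈ K → b ∈ K → a + b ∈ K := by
    intro a b ha hb
    have h := hKconv ha hb (by norm_num : (0:ℝ) ≤ 1/2) (by norm_num : (0:ℝ) ≤ 1/2) (by norm_num)
    have := hKcone 2 (by norm_num) _ h
    have e : (2:ℝ) • ((1/2:ℝ) • a + (1/2:ℝ) • b) = a + b := by
      rw [smul_add, smul_smul, smul_smul]; norm_num
    rwa [e] at this
  set c := r / Φ φ with hc
  have hΦφ : 0 < Φ φ := by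
    rcases lt_or_eq_of_le (hΦnonneg φ hφK) with h | h
    · exact h
    · exact absurd ((hΦzero φ hφK).mp h.symm) hφne
  have hcpos : 0 < c := div_pos hr hΦφ
  set u₀ := c • φ with hu0
  have hu0K : u₀ ∈ K := hKcone c hcpos.le φ hφK
  have hΦu0 : Φ u₀ = r := by
    rw [hu0, hΦhom c hcpos φ hφK, hc, div_mul_cancel₀ _ hΦφ.ne']
  -- u̲ = c • L φ
  have h1 : c • L φ - lam • u₀ ∈ K := by
    have := hKcone c hcpos.le _ hLφ
    have e : c • (L φ - lam • φ) = c • L φ - lam • u₀ := by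
      rw [smul_sub, hu0, smul_comm]
    rwa [e] at this
  have h2 : F (lam • u₀) - u₀ ∈ K := h3 u₀ hu0K hΦu0
  have hlamu0K : lam • u₀ ∈ K := hKcone lam hlam.le _ hu0K
  have hclφK : c • L φ ∈ K := hKcone c hcpos.le _ (hLK φ hφK)
  have h4 : F (c • L φ) - F (lam • u₀) ∈ K := hFmono _ _ hlamu0K h1
  have h5 : F (c • L φ) - u₀ ∈ K := by
    have := hKadd _ _ h4 h2
    simpa using this
  have h6 : L (F (c • L φ) - u₀) ∈ K := hLK _ h5
  rw [map_sub] at h6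
  have e2 : L u₀ = c • L φ := by rw [hu0, map_smul]
  rwa [e2] at h6
end

section
/- Assume (h1): L(K) ⊆ K and L has an eigenvalue λ₁ > 0 with eigenvector φ₁ ∈ K \ {0}; (h2): F is increasing on K; (h3)': there exists R > 0 such that F(λ₁u) ≤ u for all u ∈ K with Φ(u) = R; and (h4)': there exist α > 0 and μ ∈ K \ {0} such that Lμ ≥ αμ and F(αμ) ≥ μ. Then u̲ = Lμ is a lower solution and ū = (R/Φ(φ₁))·L(φ₁) is an upper solution of the equation u = LF(u), i.e., u̲ ≤ LF(u̲) and ū ≥ LF(ū). -/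
/-- Under (h1), (h2), (h3)' and (h4)', `u̲ = L μ` is a lower
solution and `ū = (R/Φ(φ₁)) • L φ₁` is an upper solution of `u = L F u`.
The order is `u ≤ v ↔ v - u ∈ K`. -/
theorem lower_upper_solutions_hammerstein_dual
    {X : Type*} [NormedAddCommGroup X] [NormedSpace ℝ X] [CompleteSpace X]
    (K : Set X) (hKclosed : IsClosed K) (hKconv : Convex ℝ K)
    (hKcone : ∀ (a : ℝ), 0 ≤ a → ∀ u ∈ K, a • u ∈ K)
    (hKsalient : ∀ u ∈ K, -u ∈ K → u = 0)
    -- semi-monotone norm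
    (γ : ℝ) (hγ : 0 < γ)
    (hsemi : ∀ u v : X, u ∈ K → v - u ∈ K → ‖u‖ ≤ γ * ‖v‖)
    -- the operators
    (L : X →ₗ[ℝ] X) (F : X → X) (hFK : ∀ u ∈ K, F u ∈ K)
    (hFcont : ContinuousOn F K)
    -- the positively homogeneous functional Φ
    (Φ : X → ℝ) (hΦnonneg : ∀ u ∈ K, 0 ≤ Φ u)
    (hΦhom : ∀ (a : ℝ), 0 < a → ∀ u ∈ K, Φ (a • u) = a * Φ u)
    (hΦzero : ∀ u ∈ K, (Φ u = 0 ↔ u = 0))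
    -- (h1)
    (hLK : ∀ u ∈ K, L u ∈ K)
    (lam₁ : ℝ) (hlam : 0 < lam₁) (φ₁ : X) (hφ₁K : φ₁ ∈ K) (hφ₁ne : φ₁ ≠ 0)
    (heig : L φ₁ = lam₁ • φ₁)
    -- (h2)
    (hFmono : ∀ u v : X, u ∈ K → v - u ∈ K → F v - F u ∈ K)
    -- (h3)'
    (R : ℝ) (hR : 0 < R)
    (h3' : ∀ u ∈ K, Φ u = R → u - F (lam₁ • u) ∈ K)
    -- (h4)'
    (α : ℝ) (hα : 0 < α) (μ : X) (hμK : μ ∈ K) (hμne : μ ≠ 0)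
    (h4a' : L μ - α • μ ∈ K) (h4b' : F (α • μ) - μ ∈ K) :
    L (F (L μ)) - L μ ∈ K ∧
    (R / Φ φ₁) • L φ₁ - L (F ((R / Φ φ₁) • L φ₁)) ∈ K := by
  have hadd : ∀ u ∈ K, ∀ v ∈ K, u + v ∈ K := by
    intro u hu v hv
    have h := hKconv hu hv (by norm_num : (0:ℝ) ≤ 1/2) (by norm_num : (0:ℝ) ≤ 1/2)
      (by norm_num)
    have h2 := hKcone 2 (by norm_num) _ h
    have : (2:ℝ) • ((1/2:ℝ) • u + (1/2:ℝ) • v) = u + v := by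
      rw [smul_add, smul_smul, smul_smul]; norm_num
    rwa [this] at h2
  constructor
  · -- lower solution
    have hαμ : α • μ ∈ K := hKcone α hα.le μ hμK
    have h1 : F (L μ) - F (α • μ) ∈ K := hFmono _ _ hαμ h4a'
    have h2 : F (L μ) - μ ∈ K := by
      have := hadd _ h1 _ h4b'
      rwa [sub_add_sub_cancel] at this
    have := hLK _ h2
    rwa [map_sub] at this
  · -- upper solution
    have hΦpos : 0 < Φ φ₁ := by
      rcases lt_or_eq_of_le (hΦnonneg _ hφ₁K) with h | h
      · exact h
      · exact absurd ((hΦzero _ hφ₁K).mp h.symm) hφ₁ne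
    set c := R / Φ φ₁ with hc
    have hcpos : 0 < c := div_pos hR hΦpos
    have hvK : c • φ₁ ∈ K := hKcone c hcpos.le _ hφ₁K
    have hΦv : Φ (c • φ₁) = R := by
      rw [hΦhom c hcpos φ₁ hφ₁K, hc, div_mul_cancel₀ _ hΦpos.ne']
    have h3 := h3' _ hvK hΦv
    have key : lam₁ • (c • φ₁) = c • L φ₁ := by
      rw [heig, smul_comm]
    rw [key] at h3
    have := hLK _ h3
    rw [map_sub, map_smul] at this
    exact this
end

section
/- Assume (a1): there exists χ ∈ K \ {0} such that N(u) ≥ p(N(u))·χ for all u ∈ K; (a2): there exists r > 0 such that p(N(rχ)) ≥ r; (a3): there exists R > 0 such that ‖N(Rψ)‖ ≤ R. Then u̲ = rχ is a lower solution and ū = Rψ is an upper solution of the equation u = N(u), i.e., N(u̲) ≥ u̲ and N(ū) ≤ ū. Moreover, if u̲ ≤ ū, N is continuous, and N maps [u̲, ū] into a relatively compact set, then there exists u* with u̲ ≤ u* ≤ ū and N(u*) = u*. -/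
/-- Fixed point equation `u = N u` via an abstract Harnack
inequality: under (a1)–(a3), `u̲ = r • χ` is a lower solution and `ū = R • ψ`
is an upper solution; moreover, if `u̲ ≤ ū`, `N` is continuous and `N` maps
`[u̲, ū]` into a relatively compact set, then `N` has a fixed point in `[u̲, ū]`.
The order is `u ≤ v ↔ v - u ∈ K`. -/
theorem harnack_lower_upper_and_fixed_point
    {X : Type*} [NormedAddCommGroup X] [NormedSpace ℝ X] [CompleteSpace X]
    (K : Set X) (hKclosed : IsClosed K) (hKconv : Convex ℝ K)
    (hKcone : ∀ (a : ℝ), 0 ≤ a → ∀ u ∈ K, a • u ∈ K)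
    (hKsalient : ∀ u ∈ K, -u ∈ K → u = 0)
    -- semi-monotone norm
    (γ : ℝ) (hγ : 0 < γ)
    (hsemi : ∀ u v : X, u ∈ K → v - u ∈ K → ‖u‖ ≤ γ * ‖v‖)
    -- the increasing operator N with N(K) ⊆ K
    (N : X → X) (hNK : ∀ u ∈ K, N u ∈ K)
    (hNmono : ∀ u v : X, u ∈ K → v - u ∈ K → N v - N u ∈ K)
    -- the seminorm p, increasing on K
    (p : Seminorm ℝ X)
    (hpmono : ∀ u v : X, u ∈ K → v - u ∈ K → p u ≤ p v)
    -- ψ ∈ K \ {0} with u ≤ ‖u‖ • ψ on K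
    (ψ : X) (hψK : ψ ∈ K) (hψne : ψ ≠ 0)
    (hψ : ∀ u ∈ K, ‖u‖ • ψ - u ∈ K)
    -- (a1)
    (χ : X) (hχK : χ ∈ K) (hχne : χ ≠ 0)
    (ha1 : ∀ u ∈ K, N u - (p (N u)) • χ ∈ K)
    -- (a2)
    (r : ℝ) (hr : 0 < r) (ha2 : r ≤ p (N (r • χ)))
    -- (a3)
    (R : ℝ) (hR : 0 < R) (ha3 : ‖N (R • ψ)‖ ≤ R) :
    (N (r • χ) - r • χ ∈ K) ∧ (R • ψ - N (R • ψ) ∈ K) ∧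
    (R • ψ - r • χ ∈ K → Continuous N →
      IsCompact (closure (N '' {u : X | u - r • χ ∈ K ∧ R • ψ - u ∈ K})) →
      ∃ u : X, u - r • χ ∈ K ∧ R • ψ - u ∈ K ∧ N u = u) := by
  -- K is closed under addition
  have haddK : ∀ a b : X, a ∈ K → b ∈ K → a + b ∈ K := by
    intro a b ha hb
    have h := hKconv ha hb (by norm_num : (0:ℝ) ≤ 1/2) (by norm_num : (0:ℝ) ≤ 1/2) (by norm_num)
    have h2 := hKcone 2 (by norm_num) _ h
    convert h2 using 1
    module
  have h0K : (0:X) ∈ K := by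
    have := hKcone 0 le_rfl ψ hψK
    simpa using this
  set lo := r • χ with hlo
  set hi := R • ψ with hhi
  have hloK : lo ∈ K := hKcone r hr.le χ hχK
  have hhiK : hi ∈ K := hKcone R hR.le ψ hψK
  -- Part 1
  have part1 : N lo - lo ∈ K := by
    have h1 := ha1 lo hloK
    have h2 : (p (N lo) - r) • χ ∈ K := hKcone _ (by linarith) χ hχK
    have := haddK _ _ h1 h2
    convert this using 1
    rw [sub_smul]; abel
  -- Part 2
  have hNhiK : N hi ∈ K := hNK hi hhiK
  have part2 : hi - N hi ∈ K := by
    have h1 := hψ (N hi) hNhiK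
    have h2 : (R - ‖N hi‖) • ψ ∈ K := hKcone _ (by linarith) ψ hψK
    have := haddK _ _ h2 h1
    convert this using 1
    rw [sub_smul]; abel
  refine ⟨part1, part2, ?_⟩
  intro hle hcont hcomp
  set u : ℕ → X := fun n => N^[n] lo with hu
  have hstep : ∀ n, u (n+1) = N (u n) := by
    intro n; simp [hu, Function.iterate_succ_apply']
  -- main induction
  have key : ∀ n, (u n - lo ∈ K) ∧ (hi - u n ∈ K) ∧ (u (n+1) - u n ∈ K) := by
    intro n
    induction n with
    | zero =>
      refine ⟨by simpa [hu] using h0K, by simpa [hu] using hle, ?_⟩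
      have : u 0 = lo := rfl
      rw [hstep, this]; exact part1
    | succ n ih =>
      obtain ⟨h1, h2, h3⟩ := ih
      have hunK : u n ∈ K := by
        have := haddK _ _ h1 hloK; simpa using this
      have hun1K : u (n+1) ∈ K := by
        rw [hstep]; exact hNK _ hunK
      have h1' : u (n+1) - lo ∈ K := by
        have := haddK _ _ h3 h1; simpa using this
      have h2' : hi - u (n+1) ∈ K := by
        have hm : N hi - N (u n) ∈ K := hNmono _ _ hunK h2
        have := haddK _ _ part2 hm
        rw [hstep]
        convert this using 1; abel
      have h3' : u (n+2) - u (n+1) ∈ K := by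
        have hm := hNmono (u n) (u (n+1)) hunK h3
        rw [← hstep n] at hm
        rw [hstep (n+1)]
        exact hm
      exact ⟨h1', h2', h3'⟩
  have hunK : ∀ n, u n ∈ K := fun n => by
    have := haddK _ _ (key n).1 hloK; simpa using this
  -- monotone: m ≥ n → u m - u n ∈ K
  have hmono : ∀ n m, n ≤ m → u m - u n ∈ K := by
    intro n m hnm
    induction m, hnm using Nat.le_induction with
    | base => simpa using h0K
    | succ m hm ih =>
      have := haddK _ _ (key m).2.2 ih; simpa using this
  -- the shifted sequence lies in the compact set
  have hmem : ∀ n, u (n+1) ∈ closure (N '' {w : X | w - r • χ ∈ K ∧ R • ψ - w ∈ K}) := by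
    intro n
    apply subset_closure
    exact ⟨u n, ⟨(key n).1, (key n).2.1⟩, (hstep n).symm⟩
  obtain ⟨a, haS, φ, hφ, hconv⟩ := hcomp.tendsto_subseq hmem
  -- a - u n ∈ K for all n
  have haK : ∀ n, a - u n ∈ K := by
    intro n
    have : Filter.Tendsto (fun k => u (φ k + 1) - u n) Filter.atTop (nhds (a - u n)) :=
      hconv.sub tendsto_const_nhds
    refine hKclosed.mem_of_tendsto this ?_
    filter_upwards [Filter.eventually_ge_atTop n] with k hk
    exact hmono n (φ k + 1) (le_trans hk (le_trans (hφ.le_apply) (Nat.le_succ _)))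
  -- full convergence u n → a
  have hfull : Filter.Tendsto u Filter.atTop (nhds a) := by
    rw [Metric.tendsto_atTop]
    intro ε hε
    have hγ1 : (0:ℝ) < γ + 1 := by linarith
    rw [Metric.tendsto_atTop] at hconv
    obtain ⟨k, hk⟩ := hconv (ε / (γ + 1)) (by positivity)
    refine ⟨φ k + 1, fun n hn => ?_⟩
    have hd : dist (u (φ k + 1)) a < ε / (γ + 1) := hk k le_rfl
    have hsub : u n - u (φ k + 1) ∈ K := hmono _ _ hn
    have hsub2 : (a - u (φ k + 1)) - (u n - u (φ k + 1)) ∈ K := by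
      have := haK n; convert this using 1; abel
    have hbnd : ‖u n - u (φ k + 1)‖ ≤ γ * ‖a - u (φ k + 1)‖ := hsemi _ _ hsub hsub2
    have : dist (u n) a ≤ dist (u n) (u (φ k + 1)) + dist (u (φ k + 1)) a := dist_triangle _ _ _
    rw [dist_eq_norm] at *
    have h1 : ‖a - u (φ k + 1)‖ = ‖u (φ k + 1) - a‖ := by rw [norm_sub_rev]
    calc ‖u n - a‖ ≤ ‖u n - u (φ k + 1)‖ + ‖u (φ k + 1) - a‖ := by
            have := norm_sub_le_norm_sub_add_norm_sub (u n) (u (φ k + 1)) a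
            linarith [this]
      _ ≤ γ * ‖u (φ k + 1) - a‖ + ‖u (φ k + 1) - a‖ := by rw [← h1]; linarith
      _ = (γ + 1) * ‖u (φ k + 1) - a‖ := by ring
      _ < (γ + 1) * (ε / (γ + 1)) := by
            apply mul_lt_mul_of_pos_left _ hγ1
            exact hd
      _ = ε := by field_simp
  -- fixed point
  have hshift : Filter.Tendsto (fun n => u (n+1)) Filter.atTop (nhds a) :=
    hfull.comp (Filter.tendsto_add_atTop_nat 1)
  have hNa : Filter.Tendsto (fun n => N (u n)) Filter.atTop (nhds (N a)) :=
    (hcont.tendsto a).comp hfull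
  have hfix : N a = a := by
    have : Filter.Tendsto (fun n => N (u n)) Filter.atTop (nhds a) := by
      simpa [hstep] using hshift
    exact tendsto_nhds_unique hNa this
  refine ⟨a, ?_, ?_, hfix⟩
  · have := haK 0
    simpa [hu] using this
  · have : Filter.Tendsto (fun n => hi - u n) Filter.atTop (nhds (hi - a)) :=
      tendsto_const_nhds.sub hfull
    exact hKclosed.mem_of_tendsto this (Filter.Eventually.of_forall fun n => (key n).2.1)
end

section
/- Assume (a1): there exists χ ∈ K \ {0} such that N(u) ≥ p(N(u))·χ for all u ∈ K; (a2): there exists r > 0 such that p(N(rχ)) ≥ r; (a3): there exists R > 0 such that ‖N(Rψ)‖ ≤ R; and rχ ≤ Rψ. Then the order interval [rχ, Rψ] is invariant under N, i.e., N([rχ, Rψ]) ⊆ [rχ, Rψ]. -/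
/-- Under (a1)–(a3) and `r • χ ≤ R • ψ`, the order interval
`[r • χ, R • ψ]` is invariant under `N`. The order is `u ≤ v ↔ v - u ∈ K`. -/
theorem harnack_interval_invariance
    {X : Type*} [NormedAddCommGroup X] [NormedSpace ℝ X] [CompleteSpace X]
    (K : Set X) (hKclosed : IsClosed K) (hKconv : Convex ℝ K)
    (hKcone : ∀ (a : ℝ), 0 ≤ a → ∀ u ∈ K, a • u ∈ K)
    (hKsalient : ∀ u ∈ K, -u ∈ K → u = 0)
    -- the increasing operator N with N(K) ⊆ K
    (N : X → X) (hNK : ∀ u ∈ K, N u ∈ K)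
    (hNmono : ∀ u v : X, u ∈ K → v - u ∈ K → N v - N u ∈ K)
    -- the seminorm p, increasing on K
    (p : Seminorm ℝ X)
    (hpmono : ∀ u v : X, u ∈ K → v - u ∈ K → p u ≤ p v)
    -- ψ ∈ K \ {0} with u ≤ ‖u‖ • ψ on K
    (ψ : X) (hψK : ψ ∈ K) (hψne : ψ ≠ 0)
    (hψ : ∀ u ∈ K, ‖u‖ • ψ - u ∈ K)
    -- (a1)
    (χ : X) (hχK : χ ∈ K) (hχne : χ ≠ 0)
    (ha1 : ∀ u ∈ K, N u - (p (N u)) • χ ∈ K)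
    -- (a2)
    (r : ℝ) (hr : 0 < r) (ha2 : r ≤ p (N (r • χ)))
    -- (a3)
    (R : ℝ) (hR : 0 < R) (ha3 : ‖N (R • ψ)‖ ≤ R)
    -- r • χ ≤ R • ψ
    (hcomp : R • ψ - r • χ ∈ K) :
    ∀ u : X, u - r • χ ∈ K → R • ψ - u ∈ K →
      (N u - r • χ ∈ K ∧ R • ψ - N u ∈ K) := by

  intro u hu1 hu2
  have hKadd : ∀ a ∈ K, ∀ b ∈ K, a + b ∈ K := by
    intro a ha b hb
    have h := hKconv ha hb (by norm_num : (0:ℝ) ≤ 1/2) (by norm_num : (0:ℝ) ≤ 1/2) (by norm_num)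
    have h2 := hKcone 2 (by norm_num) _ h
    have : (2:ℝ) • ((1/2:ℝ) • a + (1/2:ℝ) • b) = a + b := by
      rw [smul_add, smul_smul, smul_smul]; norm_num
    rwa [this] at h2
  have hrχK : r • χ ∈ K := hKcone r hr.le χ hχK
  have huK : u ∈ K := by
    have := hKadd _ hu1 _ hrχK; simpa using this
  constructor
  · -- N u - r • χ ∈ K
    have hmono := hNmono (r • χ) u hrχK hu1
    have hp : p (N (r • χ)) ≤ p (N u) := hpmono _ _ (hNK _ hrχK) hmono
    have hrle : r ≤ p (N u) := le_trans ha2 hp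
    have h1 := ha1 u huK
    have h2 : (p (N u) - r) • χ ∈ K := hKcone _ (by linarith) χ hχK
    have := hKadd _ h1 _ h2
    have heq : (N u - p (N u) • χ) + (p (N u) - r) • χ = N u - r • χ := by
      rw [sub_smul]; abel
    rwa [heq] at this
  · -- R • ψ - N u ∈ K
    have hmono := hNmono u (R • ψ) huK hu2
    have hψ1 := hψ _ (hNK _ (hKcone R hR.le ψ hψK))
    have h2 : (R - ‖N (R • ψ)‖) • ψ ∈ K := hKcone _ (by linarith) ψ hψK
    have h3 := hKadd _ hψ1 _ h2
    have h4 := hKadd _ h3 _ hmono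
    have heq : ((‖N (R • ψ)‖ • ψ - N (R • ψ)) + (R - ‖N (R • ψ)‖) • ψ) + (N (R • ψ) - N u) = R • ψ - N u := by
      rw [sub_smul]; abel
    rwa [heq] at h4
end

section
/- If condition (H1) is satisfied, then the linear Hammerstein operator L has a positive eigenvalue λ₁ > 0 whose corresponding eigenfunction φ₁ is nonnegative on [0,1] and not identically zero. -/
/-!
The eigenvalue is `λ₁ = sup {⟪L u, u⟫ : u ≥ 0, ‖u‖₂ ≤ 1}`, the inner product and norm being those
of `L²`. As the kernel is nonnegative, `|⟪L w, w⟫| ≤ ⟪L |w|, |w|⟫ ≤ λ₁ ‖w‖₂²` for every `w`, and as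
it is symmetric, polarization turns this bound on the quadratic form into `‖L w‖₂ ≤ λ₁ ‖w‖₂`.
Hence a maximizing sequence `xₙ` consists of approximate eigenvectors:
`‖L xₙ - λ₁ xₙ‖₂² ≤ 2 λ₁ (λ₁ - ⟪L xₙ, xₙ⟫) → 0`. The functions `L xₙ` are uniformly bounded and
equicontinuous, so by Arzelà–Ascoli a subsequence converges uniformly to some `φ₁ ≥ 0`, which
satisfies `L φ₁ = λ₁ φ₁`, and `φ₁ ≠ 0` since `⟪L xₙ, xₙ⟫ ≤ ‖L xₙ‖∞`.
Positivity of `λ₁` comes from (H1): it gives `L θ ≥ (L θ)(q) θ` for every `q`, so `⟪L θ, θ⟫ > 0`.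
-/

open MeasureTheory Filter Topology ContinuousMap
open scoped RealInnerProductSpace

section SymmetricOperator

variable {V E : Type*} [AddCommGroup V] [Module ℝ V] [NormedAddCommGroup E]
  [InnerProductSpace ℝ E] (ι : V →ₗ[ℝ] E) (T : V →ₗ[ℝ] V) {M : ℝ}

theorem two_mul_inner_le_of_abs_inner_self_le (hT : ∀ x y, ⟪ι (T x), ι y⟫ = ⟪ι x, ι (T y)⟫)
    (hM : ∀ x, |⟪ι (T x), ι x⟫| ≤ M * ‖ι x‖ ^ 2) (x y : V) :
    2 * ⟪ι (T x), ι y⟫ ≤ M * (‖ι x‖ ^ 2 + ‖ι y‖ ^ 2) := by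
  have polarization : ⟪ι (T (x + y)), ι (x + y)⟫ - ⟪ι (T (x - y)), ι (x - y)⟫ =
      4 * ⟪ι (T x), ι y⟫ := by
    simp only [map_add, map_sub, inner_add_left, inner_add_right, inner_sub_left,
      inner_sub_right, hT y x, real_inner_comm (ι y) (ι (T x))]
    ring
  have parallelogram : ‖ι (x + y)‖ ^ 2 + ‖ι (x - y)‖ ^ 2 = 2 * (‖ι x‖ ^ 2 + ‖ι y‖ ^ 2) := by
    rw [map_add, map_sub, norm_add_sq_real, norm_sub_sq_real]
    ring
  have h₁ := (le_abs_self _).trans (hM (x + y))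
  have h₂ := (neg_abs_le _).trans' (neg_le_neg (hM (x - y)))
  have := congrArg (M * ·) parallelogram
  linarith

theorem norm_map_le_of_abs_inner_self_le (hT : ∀ x y, ⟪ι (T x), ι y⟫ = ⟪ι x, ι (T y)⟫)
    (hM : ∀ x, |⟪ι (T x), ι x⟫| ≤ M * ‖ι x‖ ^ 2) (hM₀ : 0 < M) (x : V) :
    ‖ι (T x)‖ ≤ M * ‖ι x‖ := by
  have key := two_mul_inner_le_of_abs_inner_self_le ι T hT hM x (M⁻¹ • T x)
  rw [map_smul, inner_smul_right, real_inner_self_eq_norm_sq, norm_smul, Real.norm_eq_abs,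
    abs_of_pos (inv_pos.2 hM₀)] at key
  refine (pow_le_pow_iff_left₀ (norm_nonneg _) (by positivity) two_ne_zero).1 ?_
  field_simp at key
  nlinarith

theorem norm_sub_smul_sq_le {v w : E} (hM : 0 ≤ M) (hv : ‖v‖ ≤ M * ‖w‖) (hw : ‖w‖ ≤ 1) :
    ‖v - M • w‖ ^ 2 ≤ 2 * M * (M - ⟪v, w⟫) := by
  rw [norm_sub_sq_real, inner_smul_right, norm_smul, Real.norm_eq_abs, abs_of_nonneg hM]
  have hMw : M * ‖w‖ ≤ M := mul_le_of_le_one_right hM hw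
  have h₁ : ‖v‖ ^ 2 ≤ M ^ 2 := pow_le_pow_left₀ (norm_nonneg v) (hv.trans hMw) 2
  have h₂ : (M * ‖w‖) ^ 2 ≤ M ^ 2 := pow_le_pow_left₀ (by positivity) hMw 2
  linarith

end SymmetricOperator

theorem ContinuousMap.isCompact_closure_of_equicontinuous {X β : Type*} [TopologicalSpace X]
    [CompactSpace X] [PseudoMetricSpace β] [T2Space β] {s : Set β} (hs : IsCompact s)
    {A : Set C(X, β)} (hAs : ∀ f ∈ A, ∀ x, f x ∈ s) (hA : Equicontinuous ((↑) : A → X → β)) :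
    IsCompact (closure A) := by
  let e := ContinuousMap.isometryEquivBoundedOfCompact X β
  have hcomp : IsCompact (closure (e '' A)) := by
    refine BoundedContinuousFunction.arzela_ascoli s hs _
      (by rintro _ x ⟨f, hf, rfl⟩; exact hAs f hf x) ?_
    exact hA.comp fun g : e '' A =>
      ⟨e.symm g, by obtain ⟨f, hf, h⟩ := g.prop; simpa [← h] using hf⟩
  have := e.toHomeomorph.isCompact_preimage.2 hcomp
  rwa [e.toHomeomorph.preimage_closure, IsometryEquiv.coe_toHomeomorph,
    e.injective.preimage_image] at this

instance unitInterval.isOpenPosMeasure_volume :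
    (volume : Measure unitInterval).IsOpenPosMeasure where
  open_pos U hU hne := by
    obtain ⟨V, hV, rfl⟩ := isOpen_induced_iff.1 hU
    obtain ⟨⟨x, hx⟩, hxV⟩ := hne
    have hVI : (V ∩ Set.Ioo 0 1).Nonempty :=
      mem_closure_iff.1 (closure_Ioo (zero_ne_one' ℝ) ▸ hx) V hV hxV
    rw [unitInterval.volume_apply, Subtype.image_preimage_coe]
    refine fun h0 => (hV.inter isOpen_Ioo).measure_ne_zero volume hVI (measure_mono_null ?_ h0)
    exact fun y ⟨hyV, hy⟩ => ⟨Set.Ioo_subset_Icc_self hy, hyV⟩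

section ContinuousToL2

variable {X : Type*} [TopologicalSpace X] [CompactSpace X] [MeasurableSpace X] [BorelSpace X]
  {μ : Measure X}

theorem ContinuousMap.integrable [IsFiniteMeasure μ] (f : C(X, ℝ)) : Integrable f μ :=
  f.continuous.integrable_of_hasCompactSupport (.of_compactSpace _)

theorem ContinuousMap.inner_toLp_eq_integral [IsFiniteMeasure μ] (u v : C(X, ℝ)) :
    ⟪toLp 2 μ ℝ u, toLp 2 μ ℝ v⟫ = ∫ t, u t * v t ∂μ := by
  simp [ContinuousMap.inner_toLp, mul_comm]

theorem ContinuousMap.norm_toLp_le [IsProbabilityMeasure μ] (f : C(X, ℝ)) :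
    ‖toLp 2 μ ℝ f‖ ≤ ‖f‖ := by
  refine (ContinuousLinearMap.le_opNorm _ f).trans (mul_le_of_le_one_left (norm_nonneg f) ?_)
  simpa [measureUnivNNReal] using toLp_norm_le (E := ℝ) (p := 2) μ (𝕜 := ℝ)

theorem ContinuousMap.norm_toLp_abs [IsFiniteMeasure μ] (f : C(X, ℝ)) :
    ‖toLp 2 μ ℝ |f|‖ = ‖toLp 2 μ ℝ f‖ := by
  rw [← sq_eq_sq₀ (norm_nonneg _) (norm_nonneg _), ← real_inner_self_eq_norm_sq,
    ← real_inner_self_eq_norm_sq, inner_toLp_eq_integral, inner_toLp_eq_integral]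
  simp [abs_mul_abs_self]

theorem ContinuousMap.inner_toLp_le_norm [IsProbabilityMeasure μ] (f : C(X, ℝ)) {u : C(X, ℝ)}
    (hu : ‖toLp 2 μ ℝ u‖ ≤ 1) : ⟪toLp 2 μ ℝ f, toLp 2 μ ℝ u⟫ ≤ ‖f‖ :=
  (real_inner_le_norm _ _).trans <|
    (mul_le_of_le_one_right (norm_nonneg _) hu).trans (norm_toLp_le f)

end ContinuousToL2

section IntegralOperator

variable {X : Type*} [TopologicalSpace X] [MeasurableSpace X] {μ : Measure X}

def IsIntegralOperator (μ : Measure X) (K : C(X × X, ℝ)) (L : C(X, ℝ) →L[ℝ] C(X, ℝ)) : Prop :=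
  ∀ u t, L u t = ∫ s, K (t, s) * u s ∂μ

namespace IsIntegralOperator

variable {K : C(X × X, ℝ)} {L : C(X, ℝ) →L[ℝ] C(X, ℝ)}

theorem apply_nonneg (hL : IsIntegralOperator μ K L) (hK₀ : ∀ p, 0 ≤ K p) {u : C(X, ℝ)}
    (hu : 0 ≤ u) : 0 ≤ L u := ContinuousMap.le_def.2 fun t => by
  rw [ContinuousMap.zero_apply, hL]
  exact integral_nonneg fun s => mul_nonneg (hK₀ (t, s)) (hu s)

theorem abs_apply_le_apply_abs (hL : IsIntegralOperator μ K L) (hK₀ : ∀ p, 0 ≤ K p)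
    (u : C(X, ℝ)) : |L u| ≤ L |u| := ContinuousMap.le_def.2 fun t => by
  rw [ContinuousMap.abs_apply, hL, hL, ← Real.norm_eq_abs]
  refine (norm_integral_le_integral_norm _).trans_eq (integral_congr_ae (.of_forall fun s => ?_))
  simp only [norm_mul, Real.norm_eq_abs, abs_of_nonneg (hK₀ (t, s)), ContinuousMap.abs_apply]

variable [CompactSpace X] [BorelSpace X] [IsFiniteMeasure μ]

theorem apply_eq_inner (hL : IsIntegralOperator μ K L) (u : C(X, ℝ)) (t : X) :
    L u t = ⟪toLp 2 μ ℝ (K.curry t), toLp 2 μ ℝ u⟫ := by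
  rw [hL, inner_toLp_eq_integral]
  rfl

theorem norm_apply_le [IsProbabilityMeasure μ] (hL : IsIntegralOperator μ K L) (u : C(X, ℝ)) :
    ‖L u‖ ≤ ‖K‖ * ‖toLp 2 μ ℝ u‖ := by
  refine (L u).norm_le (by positivity) |>.2 fun t => ?_
  rw [hL.apply_eq_inner, Real.norm_eq_abs]
  refine (abs_real_inner_le_norm _ _).trans (mul_le_mul_of_nonneg_right ?_ (norm_nonneg _))
  refine (norm_toLp_le (K.curry t)).trans ((K.curry t).norm_le (norm_nonneg K) |>.2 fun s => ?_)
  exact K.norm_coe_le_norm (t, s)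

theorem isCompact_closure_image_unitBall [IsProbabilityMeasure μ]
    (hL : IsIntegralOperator μ K L) :
    IsCompact (closure (L '' {u | ‖toLp 2 μ ℝ u‖ ≤ 1})) := by
  have hbound : ∀ u, ‖toLp 2 μ ℝ u‖ ≤ 1 → ‖L u‖ ≤ ‖K‖ := fun u hu =>
    (hL.norm_apply_le u).trans (mul_le_of_le_one_right (norm_nonneg K) hu)
  refine isCompact_closure_of_equicontinuous (isCompact_Icc (a := -‖K‖) (b := ‖K‖)) ?_ ?_
  · rintro _ ⟨u, hu, rfl⟩ t
    exact abs_le.1 (((L u).norm_coe_le_norm t).trans (hbound u hu))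
  intro t₀
  let kernelL2 : X → Lp ℝ 2 μ := fun t => toLp 2 μ ℝ (K.curry t)
  have hcont : Continuous kernelL2 := (toLp 2 μ ℝ).continuous.comp K.curry.continuous
  refine Metric.equicontinuousAt_of_continuity_modulus (fun t => ‖kernelL2 t₀ - kernelL2 t‖) ?_ _
    (.of_forall ?_)
  · simpa using ((hcont.tendsto t₀).const_sub (kernelL2 t₀)).norm
  rintro t ⟨_, u, hu, rfl⟩
  rw [Real.dist_eq, hL.apply_eq_inner, hL.apply_eq_inner, ← inner_sub_left]
  exact (abs_real_inner_le_norm _ _).trans (mul_le_of_le_one_right (norm_nonneg _) hu)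

theorem inner_apply_comm [SecondCountableTopology X] (hL : IsIntegralOperator μ K L)
    (hK : ∀ t s, K (t, s) = K (s, t)) (u v : C(X, ℝ)) :
    ⟪toLp 2 μ ℝ (L u), toLp 2 μ ℝ v⟫ = ⟪toLp 2 μ ℝ u, toLp 2 μ ℝ (L v)⟫ := by
  simp only [inner_toLp_eq_integral, hL u, hL v]
  have hint : Integrable (Function.uncurry fun t s => K (t, s) * u s * v t) (μ.prod μ) :=
    Continuous.integrable_of_hasCompactSupport (by fun_prop) (.of_compactSpace _)
  calc ∫ t, (∫ s, K (t, s) * u s ∂μ) * v t ∂μ = ∫ t, ∫ s, K (t, s) * u s * v t ∂μ ∂μ := by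
        simp_rw [← integral_mul_const]
    _ = ∫ s, ∫ t, K (t, s) * u s * v t ∂μ ∂μ := integral_integral_swap hint
    _ = ∫ s, u s * ∫ t, K (s, t) * v t ∂μ ∂μ := by
        simp_rw [← integral_const_mul]
        refine integral_congr_ae (.of_forall fun s => integral_congr_ae (.of_forall fun t => ?_))
        simp only [hK t s]
        ring

end IsIntegralOperator

variable [CompactSpace X] [BorelSpace X] [IsFiniteMeasure μ]

variable (μ) in
noncomputable def coneRayleighSup (L : C(X, ℝ) →L[ℝ] C(X, ℝ)) : ℝ :=
  ⨆ u : {u : C(X, ℝ) // 0 ≤ u ∧ ‖toLp 2 μ ℝ u‖ ≤ 1}, ⟪toLp 2 μ ℝ (L u), toLp 2 μ ℝ u⟫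

namespace IsIntegralOperator

variable {K : C(X × X, ℝ)} {L : C(X, ℝ) →L[ℝ] C(X, ℝ)}

theorem bddAbove_rayleigh [IsProbabilityMeasure μ] (hL : IsIntegralOperator μ K L) :
    BddAbove (Set.range fun u : {u : C(X, ℝ) // 0 ≤ u ∧ ‖toLp 2 μ ℝ u‖ ≤ 1} =>
      ⟪toLp 2 μ ℝ (L u), toLp 2 μ ℝ u⟫) := by
  refine ⟨‖K‖, ?_⟩
  rintro _ ⟨⟨u, -, hu⟩, rfl⟩
  exact (inner_toLp_le_norm _ hu).trans <|
    (hL.norm_apply_le u).trans (mul_le_of_le_one_right (norm_nonneg K) hu)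

theorem inner_apply_self_le_of_nonneg [IsProbabilityMeasure μ] (hL : IsIntegralOperator μ K L)
    {u : C(X, ℝ)} (hu : 0 ≤ u) :
    ⟪toLp 2 μ ℝ (L u), toLp 2 μ ℝ u⟫ ≤ coneRayleighSup μ L * ‖toLp 2 μ ℝ u‖ ^ 2 := by
  rcases (norm_nonneg (toLp 2 μ ℝ u)).eq_or_lt with hr | hr
  · rw [← hr, norm_eq_zero.1 hr.symm, inner_zero_right]
    simp
  set r := ‖toLp 2 μ ℝ u‖
  have hunit : ‖toLp 2 μ ℝ (r⁻¹ • u)‖ = 1 := by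
    rw [map_smul, norm_smul, Real.norm_eq_abs, abs_inv, abs_of_pos hr, inv_mul_cancel₀ hr.ne']
  have hle := le_ciSup hL.bddAbove_rayleigh
    ⟨r⁻¹ • u, smul_nonneg (inv_nonneg.2 hr.le) hu, hunit.le⟩
  simp only [map_smul, inner_smul_left, inner_smul_right, RCLike.conj_to_real] at hle
  rw [← mul_assoc, ← mul_inv, ← sq] at hle
  rwa [inv_mul_le_iff₀ (by positivity), mul_comm] at hle

theorem abs_inner_apply_self_le [IsProbabilityMeasure μ] (hL : IsIntegralOperator μ K L)
    (hK₀ : ∀ p, 0 ≤ K p) (w : C(X, ℝ)) :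
    |⟪toLp 2 μ ℝ (L w), toLp 2 μ ℝ w⟫| ≤ coneRayleighSup μ L * ‖toLp 2 μ ℝ w‖ ^ 2 := by
  refine le_trans ?_ ((hL.inner_apply_self_le_of_nonneg (abs_nonneg w)).trans_eq
    (by rw [norm_toLp_abs]))
  rw [inner_toLp_eq_integral, inner_toLp_eq_integral, ← Real.norm_eq_abs]
  refine (norm_integral_le_integral_norm _).trans
    (integral_mono ((L w) * w).integrable.norm ((L |w|) * |w|).integrable fun t => ?_)
  rw [norm_mul, Real.norm_eq_abs, Real.norm_eq_abs]
  exact mul_le_mul_of_nonneg_right (hL.abs_apply_le_apply_abs hK₀ w t) (abs_nonneg _)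

theorem norm_toLp_apply_le [IsProbabilityMeasure μ] [SecondCountableTopology X]
    (hL : IsIntegralOperator μ K L) (hK₀ : ∀ p, 0 ≤ K p) (hK : ∀ t s, K (t, s) = K (s, t))
    (hM : 0 < coneRayleighSup μ L) (u : C(X, ℝ)) :
    ‖toLp 2 μ ℝ (L u)‖ ≤ coneRayleighSup μ L * ‖toLp 2 μ ℝ u‖ :=
  norm_map_le_of_abs_inner_self_le (toLp 2 μ ℝ).toLinearMap L.toLinearMap
    (hL.inner_apply_comm hK) (hL.abs_inner_apply_self_le hK₀) hM u

theorem mul_apply_le_apply (hL : IsIntegralOperator μ K L) {θ : C(X, ℝ)}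
    (hθ : ∀ t s q, θ t * K (q, s) ≤ K (t, s)) {u : C(X, ℝ)} (hu : 0 ≤ u) (t q : X) :
    θ t * L u q ≤ L u t := by
  rw [hL, hL, ← integral_const_mul]
  refine integral_mono ((K.curry q * u).integrable.const_mul (θ t)) (K.curry t * u).integrable
    fun s => ?_
  rw [← mul_assoc]
  exact mul_le_mul_of_nonneg_right (hθ t s q) (hu s)

theorem coneRayleighSup_pos [IsProbabilityMeasure μ] [μ.IsOpenPosMeasure]
    (hL : IsIntegralOperator μ K L) (hK₀ : ∀ p, 0 ≤ K p) {θ : C(X, ℝ)} (hθ₀ : 0 ≤ θ)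
    (hθ : ∀ t s q, θ t * K (q, s) ≤ K (t, s)) (hLθ : L θ ≠ 0) :
    0 < coneRayleighSup μ L := by
  obtain ⟨q, hq⟩ : ∃ q, L θ q ≠ 0 := by
    by_contra! h
    exact hLθ (ContinuousMap.ext h)
  have hq : 0 < L θ q := (hL.apply_nonneg hK₀ hθ₀ q).lt_of_ne' hq
  have hθL2 : 0 < ‖toLp 2 μ ℝ θ‖ := by
    refine norm_pos_iff.2 fun h => hLθ ?_
    rw [(toLp_injective μ).eq_iff' (map_zero _) |>.1 h, map_zero]
  have hlower : L θ q * ‖toLp 2 μ ℝ θ‖ ^ 2 ≤ ⟪toLp 2 μ ℝ (L θ), toLp 2 μ ℝ θ⟫ := by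
    rw [← real_inner_self_eq_norm_sq, inner_toLp_eq_integral, inner_toLp_eq_integral,
      ← integral_const_mul]
    refine integral_mono ((θ * θ).integrable.const_mul _) (L θ * θ).integrable fun t => ?_
    rw [← mul_assoc, mul_comm (L θ q)]
    exact mul_le_mul_of_nonneg_right (hL.mul_apply_le_apply hθ hθ₀ t q) (hθ₀ t)
  have := (mul_pos hq (by positivity)).trans_le
    (hlower.trans (hL.inner_apply_self_le_of_nonneg hθ₀))
  exact pos_of_mul_pos_left this (by positivity)

theorem exists_seq_tendsto_coneRayleighSup [IsProbabilityMeasure μ]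
    (hL : IsIntegralOperator μ K L) :
    ∃ x : ℕ → C(X, ℝ), (∀ n, 0 ≤ x n) ∧ (∀ n, ‖toLp 2 μ ℝ (x n)‖ ≤ 1) ∧
      Tendsto (fun n => ⟪toLp 2 μ ℝ (L (x n)), toLp 2 μ ℝ (x n)⟫) atTop
        (𝓝 (coneRayleighSup μ L)) := by
  obtain ⟨r, -, hr, hrS⟩ := exists_seq_tendsto_sSup
    (Set.range_nonempty_iff_nonempty.2 ⟨⟨0, le_rfl, by simp⟩⟩) hL.bddAbove_rayleigh
  choose x hx using hrS
  refine ⟨fun n => x n, fun n => (x n).2.1, fun n => (x n).2.2, ?_⟩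
  simp only [hx]
  exact hr

theorem tendsto_apply_sub_smul [IsProbabilityMeasure μ] [SecondCountableTopology X]
    (hL : IsIntegralOperator μ K L) (hK₀ : ∀ p, 0 ≤ K p) (hK : ∀ t s, K (t, s) = K (s, t))
    (hM : 0 < coneRayleighSup μ L) {x : ℕ → C(X, ℝ)} (hx : ∀ n, ‖toLp 2 μ ℝ (x n)‖ ≤ 1)
    (hxM : Tendsto (fun n => ⟪toLp 2 μ ℝ (L (x n)), toLp 2 μ ℝ (x n)⟫) atTop
      (𝓝 (coneRayleighSup μ L))) :
    Tendsto (fun n => L (L (x n) - coneRayleighSup μ L • x n)) atTop (𝓝 0) := by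
  set M := coneRayleighSup μ L
  have hsq : Tendsto (fun n => ‖toLp 2 μ ℝ (L (x n) - M • x n)‖ ^ 2) atTop (𝓝 0) := by
    refine squeeze_zero (fun n => by positivity) (fun n => ?_)
      (by simpa using ((tendsto_const_nhds (x := M)).sub hxM).const_mul (2 * M))
    rw [map_sub, map_smul]
    exact norm_sub_smul_sq_le hM.le (hL.norm_toLp_apply_le hK₀ hK hM (x n)) (hx n)
  have hnorm : Tendsto (fun n => ‖toLp 2 μ ℝ (L (x n) - M • x n)‖) atTop (𝓝 0) := by
    simpa [Real.sqrt_sq (norm_nonneg _)] using hsq.sqrt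
  exact squeeze_zero_norm (fun n => hL.norm_apply_le _) (by simpa using hnorm.const_mul ‖K‖)

theorem exists_nonneg_eigenvector [IsProbabilityMeasure μ] [SecondCountableTopology X]
    (hL : IsIntegralOperator μ K L) (hK₀ : ∀ p, 0 ≤ K p) (hK : ∀ t s, K (t, s) = K (s, t))
    (hM : 0 < coneRayleighSup μ L) :
    ∃ g : C(X, ℝ), 0 ≤ g ∧ g ≠ 0 ∧ L g = coneRayleighSup μ L • g := by
  obtain ⟨x, hx₀, hx₁, hxM⟩ := hL.exists_seq_tendsto_coneRayleighSup
  obtain ⟨g, -, φ, hφ, hg⟩ := hL.isCompact_closure_image_unitBall.tendsto_subseq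
    fun n => subset_closure ⟨x n, hx₁ n, rfl⟩
  refine ⟨g, ContinuousMap.le_def.2 fun t => ?_, fun hg0 => ?_, ?_⟩
  · exact ge_of_tendsto' ((continuous_eval_const t).tendsto g |>.comp hg)
      fun n => hL.apply_nonneg hK₀ (hx₀ _) t
  · have : coneRayleighSup μ L ≤ ‖g‖ :=
      le_of_tendsto_of_tendsto' (hxM.comp hφ.tendsto_atTop) hg.norm
        fun n => inner_toLp_le_norm _ (hx₁ _)
    rw [hg0, norm_zero] at this
    exact this.not_gt hM
  · have hLLx := (L.continuous.tendsto g).comp hg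
    have hsplit := ((hL.tendsto_apply_sub_smul hK₀ hK hM hx₁ hxM).comp hφ.tendsto_atTop).add
      (hg.const_smul (coneRayleighSup μ L))
    refine tendsto_nhds_unique hLLx ?_
    simpa [Function.comp_def, map_sub, map_smul] using hsplit

end IsIntegralOperator

end IntegralOperator

/-- Under condition (H1), the linear Hammerstein operator
`(L u)(t) = ∫₀¹ k(t,s) u(s) ds` has a positive eigenvalue `λ₁ > 0` whose
corresponding eigenfunction `φ₁` is nonnegative and not identically zero. -/
theorem hammerstein_positive_eigenvalue
    (k : unitInterval → unitInterval → ℝ)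
    (hkcont : Continuous (Function.uncurry k))
    (hknonneg : ∀ t s, 0 ≤ k t s)
    (hksymm : ∀ t s, k t s = k s t)
    (L : C(unitInterval, ℝ) →L[ℝ] C(unitInterval, ℝ))
    (hL : ∀ (u : C(unitInterval, ℝ)) (t : unitInterval), L u t = ∫ s, k t s * u s)
    -- (H1)
    (θ : C(unitInterval, ℝ)) (hθnonneg : ∀ t, 0 ≤ θ t)
    (hH1 : ∀ t s q, θ t * k q s ≤ k t s)
    (hLθpos : 0 < ‖L θ‖) :
    ∃ lam₁ : ℝ, 0 < lam₁ ∧ ∃ φ₁ : C(unitInterval, ℝ),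
      (∀ t, 0 ≤ φ₁ t) ∧ φ₁ ≠ 0 ∧ L φ₁ = lam₁ • φ₁ := by
  let K : C(unitInterval × unitInterval, ℝ) := ⟨Function.uncurry k, hkcont⟩
  have hLK : IsIntegralOperator volume K L := hL
  have hK₀ : ∀ p, 0 ≤ K p := fun p => hknonneg p.1 p.2
  have hM := hLK.coneRayleighSup_pos hK₀ (ContinuousMap.le_def.2 hθnonneg) hH1
    (norm_pos_iff.1 hLθpos)
  obtain ⟨φ₁, hφ₀, hφ, hLφ⟩ := hLK.exists_nonneg_eigenvector hK₀ hksymm hM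
  exact ⟨_, hM, φ₁, hφ₀, hφ, hLφ⟩
end

section
/- If condition (H1) is satisfied, then the spectral radius of the linear Hammerstein operator L satisfies r(L) ≥ ‖Lθ‖_∞ > 0. -/
open MeasureTheory
open scoped ENNReal

/-!
A positive operator `L` on an ordered Banach space (positivity of a linear map is encoded as
`Monotone L`) with `c • u ≤ L u` for some `u ≥ 0`, `u ≠ 0` has `r(L) ≥ c`. Otherwise every
`λ ≥ c` lies in the resolvent set, and the resolvent `R(λ)` is positive for all of them: for
`λ > ‖L‖` it is a Neumann series of positive operators, and positivity propagates downwards by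
`R(λ) = R(μ) ∑ ((μ - λ) R(μ))ⁿ` for `0 ≤ μ - λ < 1 / ‖R(μ)‖`; as positivity of `R(λ)` is a
closed condition, continuous induction carries it down to `λ = c`. Then
`u = R(c) ((c - L) u) ≤ 0`, a contradiction.

For the Hammerstein operator, integrating (H1) against `θ` gives `‖Lθ‖ • θ ≤ Lθ`; applying the
positive operator `L` yields `‖Lθ‖ • Lθ ≤ L (Lθ)`, so `u = Lθ` and `c = ‖Lθ‖` qualify.
-/

instance ContinuousMap.orderClosedTopology {α β : Type*} [TopologicalSpace α] [TopologicalSpace β]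
    [PartialOrder β] [OrderClosedTopology β] : OrderClosedTopology C(α, β) where
  isClosed_le' := by
    simp only [ContinuousMap.le_def, Set.ofPred_forall]
    exact isClosed_iInter fun x => isClosed_le ((continuous_eval_const x).comp continuous_fst)
      ((continuous_eval_const x).comp continuous_snd)

section MonotoneOperator

variable {E : Type*} [NormedAddCommGroup E] [NormedSpace ℝ E] [PartialOrder E]

theorem isClosed_setOf_monotone_clm {F : Type*} [NormedAddCommGroup F] [NormedSpace ℝ F]
    [PartialOrder F] [OrderClosedTopology F] : IsClosed {T : E →L[ℝ] F | Monotone T} := by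
  simp only [Monotone, Set.ofPred_forall]
  exact isClosed_iInter fun v => isClosed_iInter fun w => isClosed_iInter fun _ =>
    isClosed_le (ContinuousLinearMap.apply ℝ F v).continuous
      (ContinuousLinearMap.apply ℝ F w).continuous

theorem Monotone.clm_mul {S T : E →L[ℝ] E} (hS : Monotone S) (hT : Monotone T) :
    Monotone ⇑(S * T) :=
  hS.comp hT

theorem Monotone.clm_pow {T : E →L[ℝ] E} (hT : Monotone T) (n : ℕ) : Monotone ⇑(T ^ n) := by
  induction n with
  | zero => exact monotone_id
  | succ n ih => rw [pow_succ]; exact ih.clm_mul hT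

theorem monotone_algebraMap_clm [PosSMulMono ℝ E] {c : ℝ} (hc : 0 ≤ c) :
    Monotone ⇑(algebraMap ℝ (E →L[ℝ] E) c) := by
  intro v w hvw
  simpa only [ContinuousLinearMap.algebraMap_apply] using smul_le_smul_of_nonneg_left hvw hc

variable [IsOrderedAddMonoid E] [OrderClosedTopology E] [CompleteSpace E]

theorem Monotone.inverse_one_sub {t : E →L[ℝ] E} (ht : Monotone t) (h : ‖t‖ < 1) :
    Monotone ⇑(Ring.inverse (1 - t)) := by
  rw [← geom_series_eq_inverse t h]
  refine isClosed_setOf_monotone_clm.mem_of_tendsto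
    (summable_geometric_of_norm_lt_one h).hasSum (Filter.Eventually.of_forall fun n => ?_)
  refine Finset.sum_induction _ (fun T : E →L[ℝ] E => Monotone T) (fun _ _ => Monotone.add)
    monotone_const fun i _ => ht.clm_pow i

theorem Monotone.inverse_sub {a b : E →L[ℝ] E} (ha : IsUnit a) (ha' : Monotone ⇑(Ring.inverse a))
    (hb : Monotone b) (h : ‖Ring.inverse a * b‖ < 1) : Monotone ⇑(Ring.inverse (a - b)) := by
  have hab : a - b = a * (1 - Ring.inverse a * b) := by
    rw [mul_sub, mul_one, ← mul_assoc, Ring.mul_inverse_cancel a ha, one_mul]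
  rw [hab, Ring.inverse_mul (Or.inl ha)]
  exact ((ha'.clm_mul hb).inverse_one_sub h).clm_mul ha'

open spectrum

variable [PosSMulMono ℝ E] {L : E →L[ℝ] E}

theorem Monotone.resolvent_of_norm_lt (hL : Monotone L) {r : ℝ} (hr : ‖L‖ < r) :
    Monotone ⇑(resolvent L r) := by
  have hr0 : 0 < r := (norm_nonneg L).trans_lt hr
  have hunit : IsUnit (algebraMap ℝ (E →L[ℝ] E) r) := (Ne.isUnit hr0.ne').map _
  have hinv : Ring.inverse (algebraMap ℝ (E →L[ℝ] E) r) = algebraMap ℝ _ r⁻¹ := by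
    simpa only [mul_one] using (Ring.inverse_mul_eq_iff_eq_mul _ 1 _ hunit).mpr
      (by rw [← map_mul, mul_inv_cancel₀ hr0.ne', map_one])
  refine Monotone.inverse_sub hunit ?_ hL ?_
  · rw [hinv]; exact monotone_algebraMap_clm (inv_nonneg.mpr hr0.le)
  · rw [hinv, Algebra.algebraMap_eq_smul_one, smul_one_mul, norm_smul, norm_inv,
      Real.norm_of_nonneg hr0.le, inv_mul_lt_one₀ hr0]
    exact hr

theorem Monotone.resolvent_of_le {r s : ℝ} (hs : s ∈ resolventSet ℝ L)
    (hR : Monotone ⇑(resolvent L s)) (hrs : r ≤ s) (h : (s - r) * ‖resolvent L s‖ < 1) :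
    Monotone ⇑(resolvent L r) := by
  have hsub : algebraMap ℝ (E →L[ℝ] E) r - L
      = (algebraMap ℝ _ s - L) - algebraMap ℝ _ (s - r) := by
    rw [map_sub]; abel
  have hnorm : ‖resolvent L s * algebraMap ℝ (E →L[ℝ] E) (s - r)‖
      = (s - r) * ‖resolvent L s‖ := by
    rw [Algebra.algebraMap_eq_smul_one, mul_smul_one, norm_smul,
      Real.norm_of_nonneg (sub_nonneg.mpr hrs)]
  unfold resolvent
  rw [hsub]
  exact Monotone.inverse_sub (mem_resolventSet_iff.mp hs) hR
    (monotone_algebraMap_clm (sub_nonneg.mpr hrs)) (hnorm ▸ h)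

theorem Monotone.resolvent_of_Ici_subset_resolventSet (hL : Monotone L) {c : ℝ}
    (hc : Set.Ici c ⊆ resolventSet ℝ L) {r : ℝ} (hr : c ≤ r) : Monotone ⇑(resolvent L r) := by
  set M := max r (‖L‖ + 1)
  set s := {x : ℝ | Monotone ⇑(resolvent L x)}
  have hcont : ContinuousOn (resolvent L) (Set.Icc c M) := fun x hx =>
    (hasDerivAt_resolvent_const_left (hc hx.1)).continuousAt.continuousWithinAt
  have hclosed : IsClosed (s ∩ Set.Icc c M) := by
    rw [Set.inter_comm]
    exact hcont.preimage_isClosed_of_isClosed isClosed_Icc isClosed_setOf_monotone_clm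
  have hM : M ∈ s := hL.resolvent_of_norm_lt (lt_max_of_lt_right (lt_add_one _))
  refine hclosed.Icc_subset_of_forall_exists_lt hM (fun x hx y hyx => ?_) ⟨hr, le_max_left _ _⟩
  set δ := 1 / (‖resolvent L x‖ + 1)
  have hδ : 0 < δ := by positivity
  refine ⟨max y (x - δ), ?_, le_max_left _ _, max_lt hyx (by linarith)⟩
  refine hx.1.resolvent_of_le (hc hx.2.1.le) (max_le hyx.le (by linarith)) ?_
  calc (x - max y (x - δ)) * ‖resolvent L x‖ ≤ δ * ‖resolvent L x‖ :=
        mul_le_mul_of_nonneg_right (by linarith [le_max_right y (x - δ)]) (norm_nonneg _)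
    _ < 1 := by
        rw [div_mul_eq_mul_div, one_mul, div_lt_one (by positivity)]
        linarith

theorem ofReal_le_spectralRadius_of_smul_le (hL : Monotone L) {u : E} (hu : 0 ≤ u) (hu0 : u ≠ 0)
    {c : ℝ} (hLu : c • u ≤ L u) : ENNReal.ofReal c ≤ spectralRadius ℝ L := by
  by_contra! h
  have hρ : Set.Ici c ⊆ resolventSet ℝ L := fun r hr =>
    mem_resolventSet_of_spectralRadius_lt <| h.trans_le <|
      (ENNReal.ofReal_le_ofReal (hr.trans (Real.le_norm_self r))).trans_eq
        (ENNReal.ofReal_eq_coe_nnreal _)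
  have hR : Monotone ⇑(resolvent L c) := hL.resolvent_of_Ici_subset_resolventSet hρ le_rfl
  have hu_eq : u = resolvent L c ((algebraMap ℝ _ c - L) u) := by
    change u = (resolvent L c * (algebraMap ℝ _ c - L)) u
    rw [resolvent, Ring.inverse_mul_cancel _ (mem_resolventSet_iff.mp (hρ Set.self_mem_Ici))]
    rfl
  have hneg : (algebraMap ℝ (E →L[ℝ] E) c - L) u ≤ 0 := by
    rw [sub_apply, ContinuousLinearMap.algebraMap_apply, sub_nonpos]
    exact hLu
  exact hu0 (le_antisymm (hu_eq ▸ (hR hneg).trans_eq (map_zero _)) hu)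

end MonotoneOperator

section KernelOperator

variable {X : Type*} [TopologicalSpace X] [MeasurableSpace X] {μ : Measure X}
  {k : X → X → ℝ} {L : C(X, ℝ) →L[ℝ] C(X, ℝ)}

theorem monotone_of_kernel_nonneg (hk : ∀ t s, 0 ≤ k t s)
    (hL : ∀ u t, L u t = ∫ s, k t s * u s ∂μ) : Monotone L := by
  refine (monotone_iff_map_nonneg L).mpr fun u hu => ContinuousMap.le_def.mpr fun t => ?_
  rw [ContinuousMap.zero_apply, hL]
  exact integral_nonneg fun s => mul_nonneg (hk t s) (hu s)

variable [CompactSpace X] [OpensMeasurableSpace X] [IsFiniteMeasure μ]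

theorem integrable_kernel_mul (hk : Continuous (Function.uncurry k)) (u : C(X, ℝ)) (t : X) :
    Integrable (fun s => k t s * u s) μ :=
  ((hk.comp (Continuous.prodMk_right t)).mul u.continuous).integrable_of_hasCompactSupport
    (HasCompactSupport.of_compactSpace _)

theorem norm_smul_le_of_mul_kernel_le (hk : Continuous (Function.uncurry k))
    (hknonneg : ∀ t s, 0 ≤ k t s) (hL : ∀ u t, L u t = ∫ s, k t s * u s ∂μ)
    {θ u : C(X, ℝ)} (hθ : 0 ≤ θ) (hu : 0 ≤ u) (hH1 : ∀ t s q, θ t * k q s ≤ k t s) :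
    ‖L u‖ • θ ≤ L u := by
  refine ContinuousMap.le_def.mpr fun t => ?_
  have hLu : ∀ q, 0 ≤ L u q := ContinuousMap.le_def.mp <| by
    simpa only [map_zero] using monotone_of_kernel_nonneg hknonneg hL hu
  have hq : ∀ q, θ t * ‖L u q‖ ≤ L u t := by
    intro q
    rw [Real.norm_of_nonneg (hLu q), hL, hL, ← integral_const_mul]
    refine integral_mono ((integrable_kernel_mul hk u q).const_mul _)
      (integrable_kernel_mul hk u t) fun s => ?_
    rw [← mul_assoc]
    exact mul_le_mul_of_nonneg_right (hH1 t s q) (hu s)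
  calc (‖L u‖ • θ) t = θ t * ⨆ q, ‖L u q‖ := by
        rw [ContinuousMap.smul_apply, smul_eq_mul, mul_comm, ContinuousMap.norm_eq_iSup_norm]
    _ = ⨆ q, θ t * ‖L u q‖ := Real.mul_iSup_of_nonneg (hθ t) _
    _ ≤ L u t := Real.iSup_le hq (hLu t)

end KernelOperator

theorem hammerstein_spectral_radius_positive_general
    (k : unitInterval → unitInterval → ℝ)
    (hkcont : Continuous (Function.uncurry k))
    (hknonneg : ∀ t s, 0 ≤ k t s)
    (L : C(unitInterval, ℝ) →L[ℝ] C(unitInterval, ℝ))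
    (hL : ∀ (u : C(unitInterval, ℝ)) (t : unitInterval), L u t = ∫ s, k t s * u s)
    -- (H1)
    (θ : C(unitInterval, ℝ)) (hθnonneg : ∀ t, 0 ≤ θ t)
    (hH1 : ∀ t s q, θ t * k q s ≤ k t s)
    (hLθpos : 0 < ‖L θ‖) :
    ENNReal.ofReal ‖L θ‖ ≤ spectralRadius ℝ L ∧ 0 < spectralRadius ℝ L := by
  have hmono : Monotone L := monotone_of_kernel_nonneg hknonneg hL
  have hθ : 0 ≤ θ := hθnonneg
  have hLθ : ‖L θ‖ • L θ ≤ L (L θ) := by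
    simpa only [map_smul] using hmono (norm_smul_le_of_mul_kernel_le hkcont hknonneg hL hθ hθ hH1)
  have hr := ofReal_le_spectralRadius_of_smul_le hmono (by simpa only [map_zero] using hmono hθ)
    (norm_pos_iff.mp hLθpos) hLθ
  exact ⟨hr, (ENNReal.ofReal_pos.mpr hLθpos).trans_le hr⟩

/-- Under condition (H1), the spectral radius of the linear
Hammerstein operator `L` satisfies `r(L) ≥ ‖Lθ‖_∞ > 0`. -/
theorem hammerstein_spectral_radius_positive
    (k : unitInterval → unitInterval → ℝ)
    (hkcont : Continuous (Function.uncurry k))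
    (hknonneg : ∀ t s, 0 ≤ k t s)
    (hksymm : ∀ t s, k t s = k s t)
    (L : C(unitInterval, ℝ) →L[ℝ] C(unitInterval, ℝ))
    (hL : ∀ (u : C(unitInterval, ℝ)) (t : unitInterval), L u t = ∫ s, k t s * u s)
    -- (H1)
    (θ : C(unitInterval, ℝ)) (hθnonneg : ∀ t, 0 ≤ θ t)
    (hH1 : ∀ t s q, θ t * k q s ≤ k t s)
    (hLθpos : 0 < ‖L θ‖) :
    ENNReal.ofReal ‖L θ‖ ≤ spectralRadius ℝ L ∧ 0 < spectralRadius ℝ L :=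
  hammerstein_spectral_radius_positive_general k hkcont hknonneg L hL θ hθnonneg hH1 hLθpos
end

section
/- If condition (H1) is satisfied, then (Lθ)(t) ≥ θ(t)·‖Lθ‖_∞ for all t ∈ [0,1], and consequently, for every natural number j ≥ 1, (Lʲθ)(t) ≥ θ(t)·‖Lθ‖_∞ʲ for all t ∈ [0,1] and ‖Lʲθ‖_∞ ≥ ‖θ‖_∞·‖Lθ‖_∞ʲ. -/
open MeasureTheory

/-- Under condition (H1), one has `(Lθ)(t) ≥ θ(t)·‖Lθ‖_∞` for
all `t ∈ [0,1]`, and consequently, for every `j ≥ 1`,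
`(Lʲθ)(t) ≥ θ(t)·‖Lθ‖_∞ʲ` for all `t` and `‖Lʲθ‖_∞ ≥ ‖θ‖_∞·‖Lθ‖_∞ʲ`. -/
theorem hammerstein_iterate_lower_bounds
    (k : unitInterval → unitInterval → ℝ)
    (hkcont : Continuous (Function.uncurry k))
    (hknonneg : ∀ t s, 0 ≤ k t s)
    (hksymm : ∀ t s, k t s = k s t)
    (L : C(unitInterval, ℝ) →L[ℝ] C(unitInterval, ℝ))
    (hL : ∀ (u : C(unitInterval, ℝ)) (t : unitInterval), L u t = ∫ s, k t s * u s)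
    -- (H1)
    (θ : C(unitInterval, ℝ)) (hθnonneg : ∀ t, 0 ≤ θ t)
    (hH1 : ∀ t s q, θ t * k q s ≤ k t s)
    (hLθpos : 0 < ‖L θ‖) :
    (∀ t, θ t * ‖L θ‖ ≤ L θ t) ∧
    ∀ j : ℕ, 1 ≤ j →
      (∀ t, θ t * ‖L θ‖ ^ j ≤ (L ^ j) θ t) ∧
      ‖θ‖ * ‖L θ‖ ^ j ≤ ‖(L ^ j) θ‖ := by
  have hint : ∀ f : unitInterval → ℝ, Continuous f → Integrable f := fun f hf =>
    hf.integrable_of_hasCompactSupport (HasCompactSupport.of_compactSpace f)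
  have hkt : ∀ t : unitInterval, Continuous (fun s => k t s) := fun t =>
    hkcont.comp (Continuous.prodMk_right t)
  -- pointwise lower bound on L u for nonneg u
  have key : ∀ (u : C(unitInterval, ℝ)), (∀ s, 0 ≤ u s) → ∀ t q, θ t * L u q ≤ L u t := by
    intro u hu t q
    rw [hL, hL, ← integral_const_mul]
    apply integral_mono (hint _ (continuous_const.mul ((hkt q).mul u.continuous)))
      (hint _ ((hkt t).mul u.continuous))
    intro s
    simp only [← mul_assoc]
    exact mul_le_mul_of_nonneg_right (hH1 t s q) (hu s)
  -- L u nonneg for nonneg u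
  have hLnonneg : ∀ (u : C(unitInterval, ℝ)), (∀ s, 0 ≤ u s) → ∀ t, 0 ≤ L u t := by
    intro u hu t
    rw [hL]
    exact integral_nonneg fun s => mul_nonneg (hknonneg t s) (hu s)
  -- norm of a nonneg continuous map attained
  have hnorm : ∀ (v : C(unitInterval, ℝ)), (∀ s, 0 ≤ v s) → ∃ q, ‖v‖ = v q := by
    intro v hv
    obtain ⟨q, -, hq⟩ := isCompact_univ.exists_isMaxOn ⟨0, trivial⟩ v.continuous.continuousOn
    refine ⟨q, le_antisymm (v.norm_le (hv q) |>.mpr fun t => ?_)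
      ((le_abs_self _).trans (v.norm_coe_le_norm q))⟩
    rw [Real.norm_eq_abs, abs_of_nonneg (hv t)]; exact hq (Set.mem_univ t)
  obtain ⟨q₀, hq₀⟩ := hnorm (L θ) (hLnonneg θ hθnonneg)
  have main : ∀ t, θ t * ‖L θ‖ ≤ L θ t := by
    intro t; rw [hq₀]; exact key θ hθnonneg t q₀
  refine ⟨main, ?_⟩
  -- iterate bound by induction
  have iter : ∀ j : ℕ, 1 ≤ j → (∀ t, θ t * ‖L θ‖ ^ j ≤ (L ^ j) θ t) ∧
      (∀ t, 0 ≤ (L ^ j) θ t) := by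
    intro j hj
    induction j with
    | zero => omega
    | succ n ih =>
      rcases Nat.eq_or_lt_of_le hj with h1 | h1
      · constructor
        · intro t; rw [← h1]; simpa using main t
        · intro t; rw [← h1]; simpa using hLnonneg θ hθnonneg t
      · have hn : 1 ≤ n := by omega
        obtain ⟨ihb, ihn⟩ := ih hn
        have hpow : (L ^ (n + 1)) θ = L ((L ^ n) θ) := by
          rw [pow_succ']; rfl
        have hnn : ∀ t, 0 ≤ (L ^ (n+1)) θ t := by
          intro t; rw [hpow]
          rw [hL]
          exact integral_nonneg fun s => mul_nonneg (hknonneg t s) (ihn s)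
        refine ⟨fun t => ?_, hnn⟩
        rw [hpow, hL]
        have step : θ t * ‖L θ‖ ^ (n+1) ≤ ∫ s, k t s * (θ s * ‖L θ‖ ^ n) := by
          have : (fun s => k t s * (θ s * ‖L θ‖ ^ n)) =
              fun s => ‖L θ‖ ^ n * (k t s * θ s) := by
            funext s; ring
          rw [this, integral_const_mul, ← hL]
          have := main t
          calc θ t * ‖L θ‖ ^ (n+1) = ‖L θ‖ ^ n * (θ t * ‖L θ‖) := by ring
            _ ≤ ‖L θ‖ ^ n * L θ t :=
              mul_le_mul_of_nonneg_left (main t) (pow_nonneg (norm_nonneg _) n)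
        refine step.trans (integral_mono (hint _ ?_) (hint _ ?_) fun s => ?_)
        · exact (hkt t).mul (θ.continuous.mul continuous_const)
        · exact (hkt t).mul ((L ^ n) θ).continuous
        · exact mul_le_mul_of_nonneg_left (ihb s) (hknonneg t s)
  intro j hj
  obtain ⟨hb, hnn⟩ := iter j hj
  refine ⟨hb, ?_⟩
  obtain ⟨t₀, ht₀⟩ := hnorm θ hθnonneg
  calc ‖θ‖ * ‖L θ‖ ^ j = θ t₀ * ‖L θ‖ ^ j := by rw [ht₀]
    _ ≤ (L ^ j) θ t₀ := hb t₀
    _ ≤ |((L ^ j) θ) t₀| := le_abs_self _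
    _ ≤ ‖(L ^ j) θ‖ := ((L ^ j) θ).norm_coe_le_norm t₀
end

section
/- Under conditions (H1) and (H2), there exist real numbers 0 < r < R and a continuous nonnegative function u* : [0,1] → ℝ such that u*(t) = ∫₀¹ k(t,s) f(u*(s)) ds for all t ∈ [0,1], and (r/‖φ₁‖_∞)·(Lφ₁)(t) ≤ u*(t) ≤ R·(L1)(t) for all t ∈ [0,1], where L1 denotes L applied to the constant function 1 and r satisfies f(t) ≥ t/λ₁ for all t ∈ [0, λ₁r], while R satisfies f(t) ≤ t/‖L1‖_∞ for all t ≥ ‖L1‖_∞·R. -/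
open MeasureTheory Filter Topology Set

/-!
The solution is obtained by monotone iteration in the cone of nonnegative continuous functions.
Near `0` the nonlinearity lies above `t / λ₁`, so a small multiple `w` of the eigenfunction `φ₁` is
a subsolution; near `∞` it lies below `t / ‖L1‖`, so a large multiple `v` of `L1` is a
supersolution, and `w ≤ v`. Since `k ≥ 0` and `f` is nondecreasing, the Hammerstein operator is
monotone, so its iterates starting from `v` decrease and stay above `w`. Their pointwise limit is a
fixed point by dominated convergence, and it is continuous because `t ↦ ∫ k(t,s) h(s) ds` is
continuous for every bounded measurable `h`.
-/

theorem MonotoneOn.le_iterate_and_iterate_succ_le {α : Type*} [Preorder α] {T : α → α} {w v : α}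
    (hT : MonotoneOn T (Ici w)) (hw : w ≤ T w) (hwv : w ≤ v) (hv : T v ≤ v) (n : ℕ) :
    w ≤ T^[n] v ∧ T^[n + 1] v ≤ T^[n] v := by
  induction n with
  | zero => exact ⟨hwv, hv⟩
  | succ n ih =>
    obtain ⟨hwU, hUU⟩ := ih
    have hwU' : w ≤ T^[n + 1] v := by
      rw [Function.iterate_succ_apply']
      exact hw.trans (hT le_rfl hwU hwU)
    refine ⟨hwU', ?_⟩
    calc T^[n + 2] v = T (T^[n + 1] v) := Function.iterate_succ_apply' _ _ _
      _ ≤ T (T^[n] v) := hT hwU' hwU hUU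
      _ = T^[n + 1] v := (Function.iterate_succ_apply' _ _ _).symm

theorem exists_pos_forall_Icc_mul_le_of_tendsto {f : ℝ → ℝ} {l a : ℝ}
    (hf : Tendsto (fun t => f t / t) (𝓝[>] 0) (𝓝 l)) (ha : a < l) (hf0 : 0 ≤ f 0) :
    ∃ δ > 0, ∀ t ∈ Icc 0 δ, a * t ≤ f t := by
  obtain ⟨δ, hδ, hlt⟩ :=
    (nhdsGT_basis (0 : ℝ)).eventually_iff.1 (hf.eventually (eventually_gt_nhds ha))
  refine ⟨δ / 2, by positivity, fun t ⟨ht0, htδ⟩ => ?_⟩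
  rcases ht0.eq_or_lt with rfl | ht0
  · simpa using hf0
  · exact ((lt_div_iff₀ ht0).1 (hlt ⟨ht0, by linarith⟩)).le

theorem exists_forall_ge_le_mul_of_tendsto {f : ℝ → ℝ} {l b : ℝ}
    (hf : Tendsto (fun t => f t / t) atTop (𝓝 l)) (hb : l < b) :
    ∃ M, ∀ t ≥ M, f t ≤ b * t := by
  refine eventually_atTop.1 ?_
  filter_upwards [hf.eventually (eventually_lt_nhds hb), eventually_gt_atTop 0] with t hlt ht
  exact ((div_lt_iff₀ ht).1 hlt).le

theorem exists_radii_of_tendsto_div {f : ℝ → ℝ} (hf0 : 0 ≤ f 0) {lam N l₀ linf : ℝ}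
    (hlam : 0 < lam) (hN : 0 < N) (hl₀ : Tendsto (fun t => f t / t) (𝓝[>] 0) (𝓝 l₀))
    (hl₀gt : 1 / lam < l₀) (hlinf : Tendsto (fun t => f t / t) atTop (𝓝 linf))
    (hlinflt : linf < 1 / N) :
    ∃ r R : ℝ, 0 < r ∧ r < R ∧ (∀ t ∈ Icc 0 (lam * r), t / lam ≤ f t) ∧
      ∀ t, N * R ≤ t → f t ≤ t / N := by
  obtain ⟨δ, hδ, hfδ⟩ := exists_pos_forall_Icc_mul_le_of_tendsto hl₀ hl₀gt hf0
  obtain ⟨M, hM⟩ := exists_forall_ge_le_mul_of_tendsto hlinf hlinflt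
  refine ⟨δ / lam, max (δ / lam + 1) (M / N), by positivity,
    lt_max_of_lt_left (lt_add_one _), ?_, fun t ht => ?_⟩
  · rw [mul_div_cancel₀ _ hlam.ne']
    intro t ht
    simpa [div_eq_inv_mul] using hfδ t ht
  · simpa [div_eq_inv_mul] using hM t (((div_le_iff₀' hN).1 (le_max_right _ _)).trans ht)

section IntegralOperator

variable {X : Type*} [TopologicalSpace X] [CompactSpace X] [MeasurableSpace X]
  [OpensMeasurableSpace X] (μ : Measure X) [IsFiniteMeasure μ]

theorem tendsto_integral_kernel_mul (K : C(X × X, ℝ)) (t : X) {h : ℕ → X → ℝ} {g : X → ℝ}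
    (hh : ∀ n, AEStronglyMeasurable (h n) μ) {C : ℝ} (hC : ∀ n s, |h n s| ≤ C)
    (hlim : ∀ s, Tendsto (fun n => h n s) atTop (𝓝 (g s))) :
    Tendsto (fun n => ∫ s, K (t, s) * h n s ∂μ) atTop (𝓝 (∫ s, K (t, s) * g s ∂μ)) := by
  refine tendsto_integral_of_dominated_convergence (fun _ => ‖K‖ * C) (fun n => ?_)
    (integrable_const _) (fun n => ae_of_all _ fun s => ?_)
    (ae_of_all _ fun s => (hlim s).const_mul _)
  · exact (K.continuous.comp (Continuous.prodMk_right t)).aestronglyMeasurable.mul (hh n)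
  · rw [norm_mul]
    exact mul_le_mul (K.norm_coe_le_norm _) (hC n s) (abs_nonneg _) (norm_nonneg _)

variable [FirstCountableTopology X]

theorem continuous_integral_kernel_mul (K : C(X × X, ℝ)) {h : X → ℝ}
    (hh : AEStronglyMeasurable h μ) {C : ℝ} (hC : ∀ s, |h s| ≤ C) :
    Continuous fun t => ∫ s, K (t, s) * h s ∂μ := by
  refine continuous_of_dominated (bound := fun _ => ‖K‖ * C) (fun t => ?_) (fun t => ?_)
    (integrable_const _) (ae_of_all _ fun s => by fun_prop)
  · exact (K.continuous.comp (Continuous.prodMk_right t)).aestronglyMeasurable.mul hh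
  · refine ae_of_all _ fun s => ?_
    rw [norm_mul]
    exact mul_le_mul (K.norm_coe_le_norm _) (hC s) (abs_nonneg _) (norm_nonneg _)

noncomputable def integralOp (K : C(X × X, ℝ)) (u : C(X, ℝ)) : C(X, ℝ) :=
  ⟨fun t => ∫ s, K (t, s) * u s ∂μ,
    continuous_integral_kernel_mul μ K u.continuous.aestronglyMeasurable u.norm_coe_le_norm⟩

variable {μ}

theorem integralOp_mono {K : C(X × X, ℝ)} (hK : 0 ≤ K) : Monotone (integralOp μ K) := by
  intro u v huv t
  have hint : ∀ u : C(X, ℝ), Integrable (fun s => K (t, s) * u s) μ := fun u =>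
    ((K.comp (.prodMk (.const X t) (.id X))) * u).continuous.integrable_of_hasCompactSupport
      (HasCompactSupport.of_compactSpace _)
  exact integral_mono (hint u) (hint v) fun s => mul_le_mul_of_nonneg_left (huv s) (hK _)

theorem integralOp_comp_monotoneOn {K : C(X × X, ℝ)} (hK : 0 ≤ K) {F : C(ℝ, ℝ)}
    (hF : MonotoneOn F (Ici 0)) : MonotoneOn (fun u => integralOp μ K (F.comp u)) (Ici 0) :=
  fun _ hu _ hv huv => integralOp_mono hK fun s => hF (hu s) (hv s) (huv s)

theorem exists_integralOp_comp_eq_of_le_of_le {K : C(X × X, ℝ)} (hK : 0 ≤ K) {F : C(ℝ, ℝ)}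
    (hF : MonotoneOn F (Ici 0)) {w v : C(X, ℝ)} (hw0 : 0 ≤ w) (hwv : w ≤ v)
    (hw : w ≤ integralOp μ K (F.comp w)) (hv : integralOp μ K (F.comp v) ≤ v) :
    ∃ u : C(X, ℝ), integralOp μ K (F.comp u) = u ∧ w ≤ u ∧ u ≤ v := by
  set T := fun u => integralOp μ K (F.comp u)
  have hT : MonotoneOn T (Ici w) :=
    (integralOp_comp_monotoneOn hK hF).mono fun u hu => hw0.trans hu
  have hU := hT.le_iterate_and_iterate_succ_le hw hwv hv
  have hanti (s : X) : Antitone fun n => T^[n] v s :=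
    antitone_nat_of_succ_le fun n => (hU n).2 s
  have hbdd (s : X) : BddBelow (range fun n => T^[n] v s) :=
    ⟨w s, forall_mem_range.2 fun n => (hU n).1 s⟩
  set g : X → ℝ := fun s => ⨅ n, T^[n] v s
  have hlim (s : X) : Tendsto (fun n => T^[n] v s) atTop (𝓝 (g s)) :=
    tendsto_atTop_ciInf (hanti s) (hbdd s)
  have hwg (s : X) : w s ≤ g s := le_ciInf fun n => (hU n).1 s
  have hgv (s : X) : g s ≤ v s := ciInf_le (hbdd s) 0
  have hUv (n : ℕ) (s : X) : T^[n] v s ≤ v s := (hanti s).imp (Nat.zero_le n)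
  set C := max ‖F.comp w‖ ‖F.comp v‖
  have hbound {y : ℝ} {s : X} (hwy : w s ≤ y) (hyv : y ≤ v s) : |F y| ≤ C := by
    have h0 : 0 ≤ w s := hw0 s
    have hy0 : 0 ≤ y := h0.trans hwy
    exact (abs_le_max_abs_abs (hF h0 hy0 hwy) (hF hy0 (hy0.trans hyv) hyv)).trans
      (max_le_max ((F.comp w).norm_coe_le_norm s) ((F.comp v).norm_coe_le_norm s))
  have hg_meas : Measurable g := Measurable.iInf fun n => (T^[n] v).continuous.measurable
  have hfix (t : X) : g t = ∫ s, K (t, s) * F (g s) ∂μ := by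
    refine tendsto_nhds_unique ((hlim t).comp (tendsto_add_atTop_nat 1)) ?_
    simp only [Function.comp_def, Function.iterate_succ_apply']
    exact tendsto_integral_kernel_mul μ K t
      (fun n => (F.comp (T^[n] v)).continuous.aestronglyMeasurable)
      (fun n s => hbound ((hU n).1 s) (hUv n s))
      (fun s => (F.continuous.tendsto (g s)).comp (hlim s))
  have hg : Continuous g := by
    rw [funext hfix]
    exact continuous_integral_kernel_mul μ K
      (F.continuous.measurable.comp hg_meas).aestronglyMeasurable fun s => hbound (hwg s) (hgv s)
  exact ⟨⟨g, hg⟩, ContinuousMap.ext fun t => (hfix t).symm, hwg, hgv⟩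

end IntegralOperator

section MonotoneOperator

variable {X : Type*} [TopologicalSpace X]

theorem Monotone.apply_one_nonneg {L : C(X, ℝ) →L[ℝ] C(X, ℝ)} (hL : Monotone L) : 0 ≤ L 1 := by
  simpa using hL zero_le_one

variable [CompactSpace X]

theorem ContinuousMap.div_norm_smul_le (φ : C(X, ℝ)) {r : ℝ} (hr : 0 ≤ r) :
    (r / ‖φ‖) • φ ≤ r • 1 := by
  rcases eq_or_ne φ 0 with rfl | hφ
  · intro s
    simpa using hr
  intro s
  calc r / ‖φ‖ * φ s ≤ r / ‖φ‖ * ‖φ‖ := by gcongr; exact φ.apply_le_norm s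
    _ = r * 1 := by rw [div_mul_cancel₀ _ (norm_ne_zero_iff.2 hφ), mul_one]

variable {L : C(X, ℝ) →L[ℝ] C(X, ℝ)}

theorem div_norm_smul_le_apply_comp (hL : Monotone L) {lam r : ℝ} (hlam : 0 < lam) (hr : 0 ≤ r)
    {φ : C(X, ℝ)} (hφ : 0 ≤ φ) (heig : L φ = lam • φ) {F : C(ℝ, ℝ)}
    (hF : ∀ t ∈ Icc 0 (lam * r), t / lam ≤ F t) :
    (r / ‖φ‖) • L φ ≤ L (F.comp ((r / ‖φ‖) • L φ)) := by
  rw [← map_smul]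
  refine hL fun s => ?_
  have hψ : ((r / ‖φ‖) • L φ) s = lam * ((r / ‖φ‖) • φ) s := by
    simp only [heig, ContinuousMap.smul_apply, smul_eq_mul]
    ring
  have hle : lam * ((r / ‖φ‖) • φ) s ≤ lam * r := by
    simpa using mul_le_mul_of_nonneg_left (φ.div_norm_smul_le hr s) hlam.le
  have h0 : 0 ≤ lam * ((r / ‖φ‖) • φ) s :=
    mul_nonneg hlam.le (mul_nonneg (div_nonneg hr (norm_nonneg _)) (hφ s))
  simpa [hψ, hlam.ne'] using hF _ ⟨h0, hle⟩

theorem div_norm_smul_apply_le_smul_apply_one (hL : Monotone L) (φ : C(X, ℝ)) {r R : ℝ}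
    (hr : 0 ≤ r) (hrR : r ≤ R) : (r / ‖φ‖) • L φ ≤ R • L 1 := by
  rw [← map_smul, ← map_smul]
  exact hL ((φ.div_norm_smul_le hr).trans fun s => by simpa using hrR)

theorem apply_comp_smul_apply_one_le (hL : Monotone L) {F : C(ℝ, ℝ)} (hF : MonotoneOn F (Ici 0))
    {R : ℝ} (hR : 0 ≤ R) (hFR : F (‖L 1‖ * R) ≤ R) : L (F.comp (R • L 1)) ≤ R • L 1 := by
  have hcomp : F.comp (R • L 1) ≤ F (‖L 1‖ * R) • 1 := fun s => by
    have h0 : 0 ≤ R * L 1 s := mul_nonneg hR (hL.apply_one_nonneg s)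
    have hle : R * L 1 s ≤ ‖L 1‖ * R := by
      rw [mul_comm]
      exact mul_le_mul_of_nonneg_right ((L 1).apply_le_norm s) hR
    simpa using hF h0 (h0.trans hle) hle
  calc L (F.comp (R • L 1)) ≤ F (‖L 1‖ * R) • L 1 := by simpa using hL hcomp
    _ ≤ R • L 1 := fun s => by
      simpa using mul_le_mul_of_nonneg_right hFR (hL.apply_one_nonneg s)

end MonotoneOperator

theorem hammerstein_positive_solution_general
    (k : unitInterval → unitInterval → ℝ)
    (hkcont : Continuous (Function.uncurry k))
    (hknonneg : ∀ t s, 0 ≤ k t s)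
    (L : C(unitInterval, ℝ) →L[ℝ] C(unitInterval, ℝ))
    (hL : ∀ (u : C(unitInterval, ℝ)) (t : unitInterval), L u t = ∫ s, k t s * u s)
    -- the positive eigenvalue with nonnegative eigenfunction given by (H1)
    (lam₁ : ℝ) (hlam₁ : 0 < lam₁)
    (φ₁ : C(unitInterval, ℝ)) (hφ₁nonneg : ∀ t, 0 ≤ φ₁ t)
    (heig : L φ₁ = lam₁ • φ₁)
    -- the nonlinearity f
    (f : ℝ → ℝ) (hfcont : Continuous f) (hfnonneg : ∀ t, 0 ≤ f t)
    (hfmono : MonotoneOn f (Set.Ici (0 : ℝ)))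
    -- (H2)
    (l₀ : ℝ) (hl₀ : Filter.Tendsto (fun t => f t / t) (nhdsWithin 0 (Set.Ioi 0)) (nhds l₀))
    (hl₀gt : 1 / lam₁ < l₀)
    (linf : ℝ) (hlinf : Filter.Tendsto (fun t => f t / t) Filter.atTop (nhds linf))
    (hlinflt : linf < 1 / ‖L (1 : C(unitInterval, ℝ))‖) :
    ∃ r R : ℝ, 0 < r ∧ r < R ∧
      (∀ t ∈ Set.Icc (0 : ℝ) (lam₁ * r), t / lam₁ ≤ f t) ∧
      (∀ t : ℝ, ‖L (1 : C(unitInterval, ℝ))‖ * R ≤ t → f t ≤ t / ‖L (1 : C(unitInterval, ℝ))‖) ∧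
      ∃ u : C(unitInterval, ℝ),
        (∀ t, 0 ≤ u t) ∧
        (∀ t, u t = ∫ s, k t s * f (u s)) ∧
        (∀ t, (r / ‖φ₁‖) * L φ₁ t ≤ u t ∧ u t ≤ R * L (1 : C(unitInterval, ℝ)) t) := by
  set N := ‖L 1‖
  have hlinf0 : 0 ≤ linf :=
    ge_of_tendsto hlinf ((eventually_ge_atTop 0).mono fun t ht => div_nonneg (hfnonneg t) ht)
  have hN : 0 < N := by
    by_contra! h
    rw [le_antisymm h (norm_nonneg _), div_zero] at hlinflt
    linarith
  obtain ⟨r, R, hr, hrR, hsmall, hlarge⟩ :=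
    exists_radii_of_tendsto_div (hfnonneg 0) hlam₁ hN hl₀ hl₀gt hlinf hlinflt
  set K : C(unitInterval × unitInterval, ℝ) := ⟨Function.uncurry k, hkcont⟩
  set F : C(ℝ, ℝ) := ⟨f, hfcont⟩
  have hLK (u : C(unitInterval, ℝ)) : L u = integralOp volume K u := ContinuousMap.ext (hL u)
  have hK : 0 ≤ K := fun p => hknonneg p.1 p.2
  have hLmono : Monotone L := fun u v huv => by
    simpa only [hLK] using integralOp_mono hK huv
  have hw0 : 0 ≤ (r / ‖φ₁‖) • L φ₁ := by
    rw [heig]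
    exact fun s =>
      mul_nonneg (div_nonneg hr.le (norm_nonneg _)) (mul_nonneg hlam₁.le (hφ₁nonneg s))
  have hfR : f (N * R) ≤ R := by simpa [hN.ne'] using hlarge _ le_rfl
  have hsub := div_norm_smul_le_apply_comp hLmono hlam₁ hr.le hφ₁nonneg heig (F := F) hsmall
  have hsuper := apply_comp_smul_apply_one_le hLmono (F := F) hfmono (hr.trans hrR).le hfR
  obtain ⟨u, hu, hwu, huv⟩ := exists_integralOp_comp_eq_of_le_of_le hK hfmono hw0
    (div_norm_smul_apply_le_smul_apply_one hLmono φ₁ hr.le hrR.le)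
    (by simpa only [hLK] using hsub) (by simpa only [hLK] using hsuper)
  refine ⟨r, R, hr, hrR, hsmall, hlarge, u, fun t => (hw0 t).trans (hwu t),
    fun t => (congrArg (· t) hu).symm, fun t => ⟨hwu t, huv t⟩⟩

/-- Under conditions (H1) and (H2), the Hammerstein integral
equation `u(t) = ∫₀¹ k(t,s) f(u(s)) ds` has a nonnegative continuous solution
`u*` with `(r/‖φ₁‖_∞)·(Lφ₁)(t) ≤ u*(t) ≤ R·(L1)(t)` on `[0,1]`, where `0 < r < R`,
`f(t) ≥ t/λ₁` on `[0, λ₁ r]` and `f(t) ≤ t/‖L1‖_∞` for `t ≥ ‖L1‖_∞·R`. -/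
theorem hammerstein_positive_solution
    (k : unitInterval → unitInterval → ℝ)
    (hkcont : Continuous (Function.uncurry k))
    (hknonneg : ∀ t s, 0 ≤ k t s)
    (hksymm : ∀ t s, k t s = k s t)
    (L : C(unitInterval, ℝ) →L[ℝ] C(unitInterval, ℝ))
    (hL : ∀ (u : C(unitInterval, ℝ)) (t : unitInterval), L u t = ∫ s, k t s * u s)
    -- (H1)
    (θ : C(unitInterval, ℝ)) (hθnonneg : ∀ t, 0 ≤ θ t)
    (hH1 : ∀ t s q, θ t * k q s ≤ k t s)
    (hLθpos : 0 < ‖L θ‖)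
    -- the positive eigenvalue with nonnegative eigenfunction given by (H1)
    (lam₁ : ℝ) (hlam₁ : 0 < lam₁)
    (φ₁ : C(unitInterval, ℝ)) (hφ₁nonneg : ∀ t, 0 ≤ φ₁ t) (hφ₁ne : φ₁ ≠ 0)
    (heig : L φ₁ = lam₁ • φ₁)
    -- the nonlinearity f
    (f : ℝ → ℝ) (hfcont : Continuous f) (hfnonneg : ∀ t, 0 ≤ f t)
    (hfmono : MonotoneOn f (Set.Ici (0 : ℝ)))
    -- (H2)
    (l₀ : ℝ) (hl₀ : Filter.Tendsto (fun t => f t / t) (nhdsWithin 0 (Set.Ioi 0)) (nhds l₀))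
    (hl₀gt : 1 / lam₁ < l₀)
    (linf : ℝ) (hlinf : Filter.Tendsto (fun t => f t / t) Filter.atTop (nhds linf))
    (hlinflt : linf < 1 / ‖L (1 : C(unitInterval, ℝ))‖) :
    ∃ r R : ℝ, 0 < r ∧ r < R ∧
      (∀ t ∈ Set.Icc (0 : ℝ) (lam₁ * r), t / lam₁ ≤ f t) ∧
      (∀ t : ℝ, ‖L (1 : C(unitInterval, ℝ))‖ * R ≤ t → f t ≤ t / ‖L (1 : C(unitInterval, ℝ))‖) ∧
      ∃ u : C(unitInterval, ℝ),
        (∀ t, 0 ≤ u t) ∧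
        (∀ t, u t = ∫ s, k t s * f (u s)) ∧
        (∀ t, (r / ‖φ₁‖) * L φ₁ t ≤ u t ∧ u t ≤ R * L (1 : C(unitInterval, ℝ)) t) :=
  hammerstein_positive_solution_general k hkcont hknonneg L hL lam₁ hlam₁ φ₁ hφ₁nonneg heig f hfcont
    hfnonneg hfmono l₀ hl₀ hl₀gt linf hlinf hlinflt
end
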